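/- arXiv:2306.06554 — 14 statements merged into one kernel-verified Lean document; each statement's English description precedes it below -/
import Mathlib

section
/- Let c > 0 and let f be a probability density on [0,c] with monotone hazard rate. Then for every x ∈ (0,1], ∫₀ᶜ v·x·(∫_{v·x}^c f(u) du)·f(v) dv ≥ ∫₀^{c·x} (v/x)·(∫_{v/x}^c f(u) du)·f(v) dv. -/
/-!
Substituting `v = w x` turns the left side into `∫₀ᶜ x w S(w) f(wx) dw`, where `S(t) = ∫ₜᶜ f`
is the survival function. Since `wx ≤ w`, the monotone hazard rate gives
`f(wx) / S(wx) ≤ f(w) / S(w)`, i.e. `S(w) f(wx) ≤ S(wx) f(w)`, so the integrand is bounded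
pointwise by that of the right side.
-/

open MeasureTheory Set intervalIntegral

theorem integral_comp_div_mul (g h : ℝ → ℝ) {x : ℝ} (hx : x ≠ 0) (a b : ℝ) :
    ∫ v in a * x..b * x, g (v / x) * h v = x * ∫ w in a..b, g w * h (w * x) := by
  rw [← smul_integral_comp_mul_right, smul_eq_mul]
  simp only [mul_div_cancel_right₀ _ hx]

section Tail

variable {f : ℝ → ℝ} {a c : ℝ}

theorem IntervalIntegrable.of_mem_Icc (hf : IntervalIntegrable f volume a c) {s t : ℝ}
    (hs : s ∈ Icc a c) (ht : t ∈ Icc a c) : IntervalIntegrable f volume s t :=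
  hf.mono_set (uIcc_subset_uIcc (Icc_subset_uIcc hs) (Icc_subset_uIcc ht))

theorem integral_tail_eq_one_sub (hf : IntervalIntegrable f volume a c)
    (hf_int : ∫ v in a..c, f v = 1) {t : ℝ} (ht : t ∈ Icc a c) :
    ∫ u in t..c, f u = 1 - ∫ u in a..t, f u := by
  have ha : a ∈ Icc a c := left_mem_Icc.2 (ht.1.trans ht.2)
  rw [← hf_int, integral_interval_sub_left hf (hf.of_mem_Icc ha ht)]

theorem integral_tail_nonneg (hf_nonneg : ∀ v ∈ Icc a c, 0 ≤ f v) {t : ℝ} (ht : t ∈ Icc a c) :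
    0 ≤ ∫ u in t..c, f u :=
  integral_nonneg ht.2 fun u hu => hf_nonneg u ⟨ht.1.trans hu.1, hu.2⟩

theorem integral_tail_antitoneOn (hf : IntervalIntegrable f volume a c)
    (hf_nonneg : ∀ v ∈ Icc a c, 0 ≤ f v) :
    AntitoneOn (fun t => ∫ u in t..c, f u) (Icc a c) := by
  intro s hs t ht hst
  dsimp only
  have hc : c ∈ Icc a c := right_mem_Icc.2 (hs.1.trans hs.2)
  rw [← integral_add_adjacent_intervals (hf.of_mem_Icc hs ht) (hf.of_mem_Icc ht hc)]
  exact le_add_of_nonneg_left <|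
    integral_nonneg hst fun u hu => hf_nonneg u ⟨hs.1.trans hu.1, hu.2.trans ht.2⟩

theorem continuousOn_integral_tail (hf : IntervalIntegrable f volume a c) (hac : a ≤ c) :
    ContinuousOn (fun t => ∫ u in t..c, f u) (Icc a c) := by
  rw [← uIcc_of_le hac]
  exact continuousOn_primitive_interval_left <| by
    rwa [uIcc_of_le hac, ← intervalIntegrable_iff_integrableOn_Icc_of_le hac]

theorem integral_tail_mul_le_of_monotone_hazard (hf : IntervalIntegrable f volume a c)
    (hf_int : ∫ v in a..c, f v = 1) (hf_nonneg : ∀ v ∈ Icc a c, 0 ≤ f v)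
    (hMHR : ∀ v₁ ∈ Icc a c, ∀ v₂ ∈ Icc a c, v₁ ≤ v₂ →
      (∫ u in a..v₁, f u) < 1 → (∫ u in a..v₂, f u) < 1 →
      f v₁ / (1 - ∫ u in a..v₁, f u) ≤ f v₂ / (1 - ∫ u in a..v₂, f u))
    {s t : ℝ} (hs : s ∈ Icc a c) (ht : t ∈ Icc a c) (hst : s ≤ t) :
    (∫ u in t..c, f u) * f s ≤ (∫ u in s..c, f u) * f t := by
  have htail_t := integral_tail_nonneg hf_nonneg ht
  have htail_le := integral_tail_antitoneOn hf hf_nonneg hs ht hst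
  rcases htail_t.eq_or_lt with h0 | hpos
  · rw [← h0, zero_mul]
    exact mul_nonneg (htail_t.trans htail_le) (hf_nonneg t ht)
  · have hs' := integral_tail_eq_one_sub hf hf_int hs
    have ht' := integral_tail_eq_one_sub hf hf_int ht
    have hhazard := hMHR s hs t ht hst (by linarith) (by linarith)
    rw [← hs', ← ht', div_le_div_iff₀ (hpos.trans_le htail_le) hpos] at hhazard
    linarith

end Tail

/-- For an MHR probability density `f` on `[0,c]` and any signal ratio `x ∈ (0,1]`,
the high-CTR bidder's side of the revenue dominates the low-CTR bidder's side:
`∫₀ᶜ v·x·(∫_{v·x}^c f)·f(v) dv ≥ ∫₀^{c·x} (v/x)·(∫_{v/x}^c f)·f(v) dv`. -/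
theorem mhr_revenue_side_ineq (c : ℝ) (hc : 0 < c) (f : ℝ → ℝ)
    (hf_nonneg : ∀ v ∈ Set.Icc (0 : ℝ) c, 0 ≤ f v)
    (hf_int : (∫ v in (0 : ℝ)..c, f v) = 1)
    (hMHR : ∀ v₁ ∈ Set.Icc (0 : ℝ) c, ∀ v₂ ∈ Set.Icc (0 : ℝ) c, v₁ ≤ v₂ →
      (∫ u in (0 : ℝ)..v₁, f u) < 1 → (∫ u in (0 : ℝ)..v₂, f u) < 1 →
      f v₁ / (1 - ∫ u in (0 : ℝ)..v₁, f u) ≤ f v₂ / (1 - ∫ u in (0 : ℝ)..v₂, f u)) :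
    ∀ x ∈ Set.Ioc (0 : ℝ) 1,
      (∫ v in (0 : ℝ)..(c * x), (v / x) * (∫ u in (v / x)..c, f u) * f v)
        ≤ ∫ v in (0 : ℝ)..c, v * x * (∫ u in (v * x)..c, f u) * f v := by
  rintro x ⟨hx0, hx1⟩
  have hf : IntervalIntegrable f volume 0 c :=
    intervalIntegrable_of_integral_ne_zero (by rw [hf_int]; exact one_ne_zero)
  have hscale : MapsTo (· * x) (Icc 0 c) (Icc 0 c) := fun w hw =>
    ⟨mul_nonneg hw.1 hx0.le, (mul_le_of_le_one_right hw.1 hx1).trans hw.2⟩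
  have htail := continuousOn_integral_tail hf hc.le
  have hf_scaled : IntervalIntegrable (fun w => f (w * x)) volume 0 c := by
    have := hf.of_mem_Icc (left_mem_Icc.2 hc.le) (hscale (right_mem_Icc.2 hc.le))
    simpa [hx0.ne'] using this.comp_mul_right (c := x)
  calc (∫ v in (0 : ℝ)..(c * x), (v / x) * (∫ u in (v / x)..c, f u) * f v)
      = x * ∫ w in (0 : ℝ)..c, w * (∫ u in w..c, f u) * f (w * x) := by
        simpa only [zero_mul] using
          integral_comp_div_mul (fun w => w * ∫ u in w..c, f u) f hx0.ne' 0 c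
    _ = ∫ w in (0 : ℝ)..c, x * (w * (∫ u in w..c, f u) * f (w * x)) :=
        (intervalIntegral.integral_const_mul _ _).symm
    _ ≤ ∫ w in (0 : ℝ)..c, w * x * (∫ u in (w * x)..c, f u) * f w := by
        refine integral_mono_on hc.le ?_ ?_ fun w hw => ?_
        · refine (hf_scaled.continuousOn_mul ?_).const_mul x
          rw [uIcc_of_le hc.le]
          exact continuousOn_id.mul htail
        · refine hf.continuousOn_mul ?_
          rw [uIcc_of_le hc.le]
          exact (continuousOn_id.mul continuousOn_const).mul
            (htail.comp (continuousOn_id.mul continuousOn_const) hscale)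
        · have hcross := integral_tail_mul_le_of_monotone_hazard hf hf_int hf_nonneg hMHR
            (hscale hw) hw (mul_le_of_le_one_right hw.1 hx1)
          linarith [mul_le_mul_of_nonneg_left hcross (mul_nonneg hw.1 hx0.le)]
end

section
/- Let c > 0 and let f be an MHR probability density on [0,c]. For every l ∈ [0,1]: sup_{x ∈ (0,1]} g_f(x,l) ≥ sup_{y ∈ (0,1]} h_f(y,l), where h_f(y,l) = ∫₀^{c·y} (v/y)·(∫_{v/y}^c f(u) du)·f(v) dv + l·∫₀ᶜ v·y·(∫_{v·y}^c f(u) du)·f(v) dv. That is, the expected revenue over all signal ratios s₂/s₁ > 0 is maximized at some ratio ≤ 1. -/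
open MeasureTheory Set

/-- Expected revenue `g_f(x,l)` of the two-bidder click-through auction with CTR pair
`(1,l)`, i.i.d. values with density `f` on `[0,c]`, and signal ratio `s₂/s₁ = x`. -/
noncomputable def gRev (c : ℝ) (f : ℝ → ℝ) (x l : ℝ) : ℝ :=
  (∫ v in (0 : ℝ)..c, v * x * (∫ u in (v * x)..c, f u) * f v)
  + l * ∫ v in (0 : ℝ)..(c * x), (v / x) * (∫ u in (v / x)..c, f u) * f v

/-- Expected revenue `h_f(y,l)` of the same auction when the signal ratio is
`s₂/s₁ = 1/y ≥ 1`. -/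
noncomputable def hRev (c : ℝ) (f : ℝ → ℝ) (y l : ℝ) : ℝ :=
  (∫ v in (0 : ℝ)..(c * y), (v / y) * (∫ u in (v / y)..c, f u) * f v)
  + l * ∫ v in (0 : ℝ)..c, v * y * (∫ u in (v * y)..c, f u) * f v

/-- For an MHR density, the supremum of the expected revenue over signal ratios in `(0,1]`
dominates the supremum over signal ratios in `[1,∞)`: the optimal signal ratio is at
most `1`. -/
theorem optimal_signal_ratio_le_one (c : ℝ) (hc : 0 < c) (f : ℝ → ℝ)
    (hf_nonneg : ∀ v ∈ Set.Icc (0 : ℝ) c, 0 ≤ f v)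
    (hf_int : (∫ v in (0 : ℝ)..c, f v) = 1)
    (hMHR : ∀ v₁ ∈ Set.Icc (0 : ℝ) c, ∀ v₂ ∈ Set.Icc (0 : ℝ) c, v₁ ≤ v₂ →
      (∫ u in (0 : ℝ)..v₁, f u) < 1 → (∫ u in (0 : ℝ)..v₂, f u) < 1 →
      f v₁ / (1 - ∫ u in (0 : ℝ)..v₁, f u) ≤ f v₂ / (1 - ∫ u in (0 : ℝ)..v₂, f u)) :
    ∀ l ∈ Set.Icc (0 : ℝ) 1,
      sSup ((fun y => hRev c f y l) '' Set.Ioc (0 : ℝ) 1)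
        ≤ sSup ((fun x => gRev c f x l) '' Set.Ioc (0 : ℝ) 1) := by
  -- notation
  set S : ℝ → ℝ := fun w => ∫ u in w..c, f u with hS
  set F : ℝ → ℝ := fun w => ∫ u in (0:ℝ)..w, f u with hF
  -- f is interval integrable on [0,c]
  have hInt : IntervalIntegrable f volume 0 c := by
    by_contra h
    rw [intervalIntegral.integral_undef h] at hf_int
    norm_num at hf_int
  have hIntSub : ∀ a b : ℝ, a ∈ Set.Icc (0:ℝ) c → b ∈ Set.Icc (0:ℝ) c →
      IntervalIntegrable f volume a b := by
    intro a b ha hb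
    refine hInt.mono_set (Set.uIcc_subset_uIcc ?_ ?_) <;>
      rw [Set.uIcc_of_le hc.le] <;> assumption
  -- basic facts about S and F
  have hFS : ∀ w ∈ Set.Icc (0:ℝ) c, F w + S w = 1 := by
    intro w hw
    rw [hF, hS, intervalIntegral.integral_add_adjacent_intervals
      (hIntSub 0 w (Set.left_mem_Icc.2 hc.le) hw)
      (hIntSub w c hw (Set.right_mem_Icc.2 hc.le))]
    exact hf_int
  have hS_nonneg : ∀ w ∈ Set.Icc (0:ℝ) c, 0 ≤ S w := by
    intro w hw
    refine intervalIntegral.integral_nonneg hw.2 ?_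
    intro u hu
    exact hf_nonneg u ⟨le_trans hw.1 hu.1, hu.2⟩
  have hF_nonneg : ∀ w ∈ Set.Icc (0:ℝ) c, 0 ≤ F w := by
    intro w hw
    refine intervalIntegral.integral_nonneg hw.1 ?_
    intro u hu
    exact hf_nonneg u ⟨hu.1, le_trans hu.2 hw.2⟩
  have hS_le_one : ∀ w ∈ Set.Icc (0:ℝ) c, S w ≤ 1 := by
    intro w hw
    have := hFS w hw
    have := hF_nonneg w hw
    linarith
  have hF_mono : ∀ w₁ ∈ Set.Icc (0:ℝ) c, ∀ w₂ ∈ Set.Icc (0:ℝ) c, w₁ ≤ w₂ → F w₁ ≤ F w₂ := by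
    intro w₁ h₁ w₂ h₂ h12
    have : F w₁ + (∫ u in w₁..w₂, f u) = F w₂ :=
      intervalIntegral.integral_add_adjacent_intervals
        (hIntSub 0 w₁ (Set.left_mem_Icc.2 hc.le) h₁) (hIntSub w₁ w₂ h₁ h₂)
    have hnn : 0 ≤ ∫ u in w₁..w₂, f u := by
      refine intervalIntegral.integral_nonneg h12 ?_
      intro u hu
      exact hf_nonneg u ⟨le_trans h₁.1 hu.1, le_trans hu.2 h₂.2⟩
    linarith
  -- continuity of S on [0,c]
  have hIcc : Set.uIcc (0:ℝ) c = Set.Icc 0 c := Set.uIcc_of_le hc.le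
  have hF_cont : ContinuousOn F (Set.Icc (0:ℝ) c) := by
    have := intervalIntegral.continuousOn_primitive_interval
      (a := (0:ℝ)) (b := c) (μ := volume) (f := f)
      ((intervalIntegrable_iff' (f := f)).1 hInt)
    rwa [hIcc] at this
  have hS_cont : ContinuousOn S (Set.Icc (0:ℝ) c) := by
    have : ContinuousOn (fun w => 1 - F w) (Set.Icc (0:ℝ) c) :=
      continuousOn_const.sub hF_cont
    refine this.congr ?_
    intro w hw
    have := hFS w hw
    simp only
    linarith
  -- pointwise MHR inequality
  have hmem : ∀ y ∈ Set.Ioc (0:ℝ) 1, ∀ v ∈ Set.Icc (0:ℝ) c, v * y ∈ Set.Icc (0:ℝ) c := by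
    intro y hy v hv
    constructor
    · exact mul_nonneg hv.1 hy.1.le
    · calc v * y ≤ v * 1 := by
            exact mul_le_mul_of_nonneg_left hy.2 hv.1
        _ ≤ c := by linarith [hv.2]
  have hRatio : ∀ y ∈ Set.Ioc (0:ℝ) 1, ∀ v ∈ Set.Icc (0:ℝ) c,
      v * S v * f (v * y) ≤ v * S (v * y) * f v := by
    intro y hy v hv
    have hvy : v * y ∈ Set.Icc (0:ℝ) c := hmem y hy v hv
    rcases eq_or_lt_of_le (hS_nonneg v hv) with h0 | hpos
    · -- S v = 0 : LHS = 0 ≤ RHS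
      rw [← h0]
      have : (0:ℝ) ≤ v * S (v * y) * f v :=
        mul_nonneg (mul_nonneg hv.1 (hS_nonneg _ hvy)) (hf_nonneg v hv)
      linarith [this]
    · -- S v > 0
      have hFv : F v < 1 := by have := hFS v hv; linarith
      have hFvy : F (v * y) < 1 :=
        lt_of_le_of_lt (hF_mono (v*y) hvy v hv
          (by nlinarith [hv.1, hy.2, hy.1.le])) hFv
      have hSvy : 0 < S (v * y) := by have := hFS (v*y) hvy; linarith
      have hdiv := hMHR (v * y) hvy v hv
        (by nlinarith [hv.1, hy.2, hy.1.le]) hFvy hFv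
      have e1 : (1 - ∫ u in (0:ℝ)..(v*y), f u) = S (v * y) := by
        have := hFS (v*y) hvy; rw [hF] at this; simp only at this; linarith
      have e2 : (1 - ∫ u in (0:ℝ)..v, f u) = S v := by
        have := hFS v hv; rw [hF] at this; simp only at this; linarith
      rw [e1, e2, div_le_div_iff₀ hSvy hpos] at hdiv
      nlinarith [hv.1, hdiv]
  -- integrability
  have hI1 : ∀ y ∈ Set.Ioc (0:ℝ) 1,
      IntervalIntegrable (fun v => v * S (v * y) * f v) volume 0 c := by
    intro y hy
    have hg : ContinuousOn (fun v => v * S (v * y)) (Set.uIcc (0:ℝ) c) := by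
      rw [hIcc]
      exact continuousOn_id.mul (hS_cont.comp
        ((continuous_mul_right y).continuousOn) (fun v hv => hmem y hy v hv))
    exact hInt.continuousOn_mul hg
  have hI2 : ∀ y ∈ Set.Ioc (0:ℝ) 1,
      IntervalIntegrable (fun v => v * S v * f (v * y)) volume 0 c := by
    intro y hy
    have hy0 : y ≠ 0 := ne_of_gt hy.1
    have hf2 : IntervalIntegrable (fun v => f (v * y)) volume 0 c := by
      have := (hIntSub 0 (c * y) (Set.left_mem_Icc.2 hc.le)
        (hmem y hy c (Set.right_mem_Icc.2 hc.le))).comp_mul_right (c := y)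
      simpa [hy0, mul_div_assoc, div_self hy0] using this
    have hg : ContinuousOn (fun v => v * S v) (Set.uIcc (0:ℝ) c) := by
      rw [hIcc]
      exact continuousOn_id.mul hS_cont
    exact hf2.continuousOn_mul hg
  -- substitution
  have hsub : ∀ y ∈ Set.Ioc (0:ℝ) 1,
      (∫ v in (0:ℝ)..(c * y), (v / y) * S (v / y) * f v)
        = y * ∫ w in (0:ℝ)..c, w * S w * f (w * y) := by
    intro y hy
    have hy0 : y ≠ 0 := ne_of_gt hy.1
    have h := intervalIntegral.smul_integral_comp_mul_right (a := (0:ℝ)) (b := c)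
      (fun v => (v / y) * S (v / y) * f v) y
    rw [zero_mul] at h
    rw [← h]
    simp only [smul_eq_mul]
    congr 1
    apply intervalIntegral.integral_congr
    intro x _
    have hxy : x * y / y = x := by field_simp
    simp only [hxy]
  -- B ≤ A
  have hBA : ∀ y ∈ Set.Ioc (0:ℝ) 1,
      (∫ v in (0:ℝ)..(c * y), (v / y) * S (v / y) * f v)
        ≤ ∫ v in (0:ℝ)..c, v * y * S (v * y) * f v := by
    intro y hy
    rw [hsub y hy]
    have h1 : (∫ w in (0:ℝ)..c, w * S w * f (w * y))
        ≤ ∫ w in (0:ℝ)..c, w * S (w * y) * f w :=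
      intervalIntegral.integral_mono_on hc.le (hI2 y hy) (hI1 y hy)
        (fun v hv => hRatio y hy v hv)
    have h2 : (∫ v in (0:ℝ)..c, v * y * S (v * y) * f v)
        = y * ∫ v in (0:ℝ)..c, v * S (v * y) * f v := by
      rw [← intervalIntegral.integral_const_mul]
      apply intervalIntegral.integral_congr
      intro v _
      ring
    rw [h2]
    exact mul_le_mul_of_nonneg_left h1 hy.1.le
  -- bounds
  have hA_le : ∀ y ∈ Set.Ioc (0:ℝ) 1,
      (∫ v in (0:ℝ)..c, v * y * S (v * y) * f v) ≤ c := by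
    intro y hy
    have hint1 : IntervalIntegrable (fun v => v * y * S (v * y) * f v) volume 0 c := by
      have hg : ContinuousOn (fun v => v * y * S (v * y)) (Set.uIcc (0:ℝ) c) := by
        rw [hIcc]
        exact (continuousOn_id.mul continuousOn_const).mul (hS_cont.comp
          ((continuous_mul_right y).continuousOn) (fun v hv => hmem y hy v hv))
      exact hInt.continuousOn_mul hg
    have hint2 : IntervalIntegrable (fun v => c * f v) volume 0 c :=
      hInt.continuousOn_mul continuousOn_const
    have hmono : (∫ v in (0:ℝ)..c, v * y * S (v * y) * f v)
        ≤ ∫ v in (0:ℝ)..c, c * f v := by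
      refine intervalIntegral.integral_mono_on hc.le hint1 hint2 ?_
      intro v hv
      have h1 : 0 ≤ v * y := mul_nonneg hv.1 hy.1.le
      have h2 : v * y ≤ c := (hmem y hy v hv).2
      have h3 : 0 ≤ S (v * y) := hS_nonneg _ (hmem y hy v hv)
      have h4 : S (v * y) ≤ 1 := hS_le_one _ (hmem y hy v hv)
      have h5 : 0 ≤ f v := hf_nonneg v hv
      have h6 : v * y * S (v * y) ≤ c := by nlinarith
      exact mul_le_mul_of_nonneg_right h6 h5
    rw [intervalIntegral.integral_const_mul, hf_int] at hmono
    linarith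
  have hB_nn : ∀ y ∈ Set.Ioc (0:ℝ) 1,
      0 ≤ ∫ v in (0:ℝ)..(c * y), (v / y) * S (v / y) * f v := by
    intro y hy
    refine intervalIntegral.integral_nonneg (mul_nonneg hc.le hy.1.le) ?_
    intro v hv
    have hvy : v / y ∈ Set.Icc (0:ℝ) c := by
      constructor
      · exact div_nonneg hv.1 hy.1.le
      · rw [div_le_iff₀ hy.1]
        exact hv.2.trans (by rw [mul_comm])
    refine mul_nonneg (mul_nonneg hvy.1 (hS_nonneg _ hvy)) ?_
    refine hf_nonneg v ⟨hv.1, hv.2.trans ?_⟩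
    nlinarith [hy.2, hc.le]
  -- conclusion
  intro l hl
  have egRev : ∀ y : ℝ, gRev c f y l
      = (∫ v in (0:ℝ)..c, v * y * S (v * y) * f v)
        + l * ∫ v in (0:ℝ)..(c * y), (v / y) * S (v / y) * f v := fun y => rfl
  have ehRev : ∀ y : ℝ, hRev c f y l
      = (∫ v in (0:ℝ)..(c * y), (v / y) * S (v / y) * f v)
        + l * ∫ v in (0:ℝ)..c, v * y * S (v * y) * f v := fun y => rfl
  have key : ∀ y ∈ Set.Ioc (0:ℝ) 1, hRev c f y l ≤ gRev c f y l := by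
    intro y hy
    rw [egRev, ehRev]
    have h1 := hBA y hy
    nlinarith [hl.1, hl.2, h1]
  have hbdd : BddAbove ((fun x => gRev c f x l) '' Set.Ioc (0:ℝ) 1) := by
    refine ⟨2 * c, ?_⟩
    rintro b ⟨x, hx, rfl⟩
    show gRev c f x l ≤ 2 * c
    rw [egRev]
    have h1 := hA_le x hx
    have h2 := hB_nn x hx
    have h3 := hBA x hx
    nlinarith [hl.1, hl.2]
  refine csSup_le ⟨hRev c f 1 l, Set.mem_image_of_mem _ (by norm_num)⟩ ?_
  rintro b ⟨y, hy, rfl⟩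
  show hRev c f y l ≤ _
  exact le_trans (key y hy) (le_csSup hbdd (Set.mem_image_of_mem _ hy))
end

section
/- Let c > 0, let f be a continuous probability density on [0,c] with monotone hazard rate, and let l ∈ [0,1). Extend g_f(·,l) to x = 0 by g_f(0,l) = 0. Then every x* ∈ [0,1] satisfying g_f(x*,l) ≥ g_f(x,l) for all x ∈ [0,1] must satisfy x* > l; in particular, g_f(·,l) is strictly increasing on [0,l]. -/
/-!
Substituting `v = x t` and integrating by parts turns the second term of `g_f(x,l)` into
`∫₀ᶜ (t f(t) - S(t)) F(x t) dt`, where `F` is the distribution function and `S = 1 - F`; this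
makes `x ↦ g_f(x,l)` a parametric integral with a continuous `x`-derivative. For `x ≤ l`, the
monotone hazard rate in the form `S(v) f(v x) ≤ S(v x) f(v)`, together with `S(v) ≤ S(v x)`,
bounds the integrand of that derivative below by `(1 - l) v S(v) f(v)`, whose integral is
`(1 - l) ∫₀ᶜ S² / 2 > 0`. So `g_f(·,l)` has positive derivative on `[0,l]`: it is strictly
increasing there, and no point of `[0,l]` maximizes it on `[0,1]`. Only the values of `f` on
`[0,c]` enter, so `f` may first be replaced by its extension that is constant outside `[0,c]`.
-/

open MeasureTheory Set

theorem hasDerivAt_intervalIntegral_of_continuous {E : Type*} [NormedAddCommGroup E]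
    [NormedSpace ℝ E] {F F' : ℝ → ℝ → E} {a b : ℝ}
    (hF : Continuous fun p : ℝ × ℝ => F p.1 p.2) (hF' : Continuous fun p : ℝ × ℝ => F' p.1 p.2)
    (hderiv : ∀ x t, HasDerivAt (fun x => F x t) (F' x t) x) (x₀ : ℝ) :
    HasDerivAt (fun x => ∫ t in a..b, F x t) (∫ t in a..b, F' x₀ t) x₀ := by
  obtain ⟨K, hK⟩ := ((isCompact_closedBall x₀ 1).prod isCompact_uIcc).exists_bound_of_continuousOn
    (hF'.continuousOn (s := Metric.closedBall x₀ 1 ×ˢ uIcc a b))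
  have hF_t (x : ℝ) : Continuous (F x) := hF.comp (.prodMk_right x)
  refine (intervalIntegral.hasDerivAt_integral_of_dominated_loc_of_deriv_le (bound := fun _ => K)
    (Metric.ball_mem_nhds x₀ one_pos) (.of_forall fun x => (hF_t x).aestronglyMeasurable)
    ((hF_t x₀).intervalIntegrable _ _) (hF'.comp (.prodMk_right x₀)).aestronglyMeasurable
    (.of_forall fun t ht x hx => hK (x, t) ⟨Metric.ball_subset_closedBall hx, uIoc_subset_uIcc ht⟩)
    intervalIntegrable_const (.of_forall fun t _ x _ => hderiv x t)).2

theorem IsMaxOn.hasDerivAt_nonpos {φ : ℝ → ℝ} {s : Set ℝ} {a b φ' : ℝ} (h : IsMaxOn φ s a)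
    (hφ : HasDerivAt φ φ' a) (hab : a < b) (hs : Icc a b ⊆ s) : φ' ≤ 0 := by
  have hcone : b - a ∈ posTangentConeAt (Icc a b) a :=
    sub_mem_posTangentConeAt_of_segment_subset (segment_eq_Icc hab.le).subset
  have := (h.on_subset hs).localize.hasFDerivWithinAt_nonpos hφ.hasFDerivAt.hasFDerivWithinAt hcone
  rw [ContinuousLinearMap.toSpanSingleton_apply, smul_eq_mul] at this
  exact nonpos_of_mul_nonpos_right this (sub_pos.2 hab)

namespace SignalRatio

variable {c : ℝ} {f g : ℝ → ℝ}

noncomputable def survival (c : ℝ) (f : ℝ → ℝ) (t : ℝ) : ℝ := ∫ u in t..c, f u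

noncomputable def cumulative (f : ℝ → ℝ) (t : ℝ) : ℝ := ∫ u in (0 : ℝ)..t, f u

lemma hasDerivAt_survival (hf : Continuous f) (t : ℝ) : HasDerivAt (survival c f) (-f t) t :=
  intervalIntegral.integral_hasDerivAt_left (hf.intervalIntegrable _ _)
    (hf.stronglyMeasurableAtFilter _ _) hf.continuousAt

lemma hasDerivAt_cumulative (hf : Continuous f) (t : ℝ) : HasDerivAt (cumulative f) (f t) t :=
  (hf.integral_hasStrictDerivAt 0 t).hasDerivAt

lemma continuous_survival (hf : Continuous f) : Continuous (survival c f) :=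
  continuous_iff_continuousAt.2 fun t => (hasDerivAt_survival hf t).continuousAt

lemma continuous_cumulative (hf : Continuous f) : Continuous (cumulative f) :=
  continuous_iff_continuousAt.2 fun t => (hasDerivAt_cumulative hf t).continuousAt

lemma survival_self : survival c f c = 0 := intervalIntegral.integral_same

@[simp] lemma cumulative_zero : cumulative f 0 = 0 := intervalIntegral.integral_same

lemma cumulative_add_survival (hf : ContinuousOn f (Icc 0 c)) {t : ℝ} (ht : t ∈ Icc 0 c) :
    cumulative f t + survival c f t = ∫ u in (0 : ℝ)..c, f u :=
  intervalIntegral.integral_add_adjacent_intervals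
    ((hf.mono (Icc_subset_Icc le_rfl ht.2)).intervalIntegrable_of_Icc ht.1)
    ((hf.mono (Icc_subset_Icc ht.1 le_rfl)).intervalIntegrable_of_Icc ht.2)

lemma survival_antitoneOn (hf : ContinuousOn f (Icc 0 c)) (hf₀ : ∀ v ∈ Icc 0 c, 0 ≤ f v) :
    AntitoneOn (survival c f) (Icc 0 c) := by
  intro s hs t ht hst
  have hsplit : survival c f s = (∫ u in s..t, f u) + survival c f t :=
    (intervalIntegral.integral_add_adjacent_intervals
      ((hf.mono (Icc_subset_Icc hs.1 ht.2)).intervalIntegrable_of_Icc hst)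
      ((hf.mono (Icc_subset_Icc ht.1 le_rfl)).intervalIntegrable_of_Icc ht.2)).symm
  have hmid : 0 ≤ ∫ u in s..t, f u :=
    intervalIntegral.integral_nonneg hst fun u hu => hf₀ u ⟨hs.1.trans hu.1, hu.2.trans ht.2⟩
  linarith

lemma survival_nonneg (hf₀ : ∀ v ∈ Icc 0 c, 0 ≤ f v) {t : ℝ} (ht : t ∈ Icc 0 c) :
    0 ≤ survival c f t :=
  intervalIntegral.integral_nonneg ht.2 fun u hu => hf₀ u ⟨ht.1.trans hu.1, hu.2⟩

lemma survival_congr (hfg : EqOn f g (Icc 0 c)) {t : ℝ} (ht : t ∈ Icc 0 c) :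
    survival c f t = survival c g t :=
  intervalIntegral.integral_congr fun u hu => by
    rw [uIcc_of_le ht.2] at hu; exact hfg ⟨ht.1.trans hu.1, hu.2⟩

lemma mul_le_mul_of_div_le_div_of_le {a b s t : ℝ} (hts : t ≤ s) (ht : 0 ≤ t) (hb : 0 ≤ b)
    (h : 0 < t → a / s ≤ b / t) : t * a ≤ s * b := by
  rcases ht.eq_or_lt with rfl | ht
  · simpa using mul_nonneg hts hb
  have := h ht
  rw [div_le_div_iff₀ (ht.trans_le hts) ht] at this
  linarith

/-- Monotonicity of the hazard rate `f / survival c f`, cross-multiplied so that it still makes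
sense where the survival function vanishes. -/
def MonotoneHazard (c : ℝ) (f : ℝ → ℝ) : Prop :=
  ∀ ⦃w v⦄, 0 ≤ w → w ≤ v → v ≤ c → survival c f v * f w ≤ survival c f w * f v

lemma monotoneHazard_of_hazardRate_mono (hf : ContinuousOn f (Icc 0 c))
    (hf₀ : ∀ v ∈ Icc 0 c, 0 ≤ f v) (hf_int : ∫ v in (0 : ℝ)..c, f v = 1)
    (hMHR : ∀ v₁ ∈ Icc (0 : ℝ) c, ∀ v₂ ∈ Icc (0 : ℝ) c, v₁ ≤ v₂ →
      (∫ u in (0 : ℝ)..v₁, f u) < 1 → (∫ u in (0 : ℝ)..v₂, f u) < 1 →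
      f v₁ / (1 - ∫ u in (0 : ℝ)..v₁, f u) ≤ f v₂ / (1 - ∫ u in (0 : ℝ)..v₂, f u)) :
    MonotoneHazard c f := by
  intro w v hw hwv hvc
  have hw' : w ∈ Icc 0 c := ⟨hw, hwv.trans hvc⟩
  have hv' : v ∈ Icc 0 c := ⟨hw.trans hwv, hvc⟩
  have hcdf {t : ℝ} (ht : t ∈ Icc 0 c) : ∫ u in (0 : ℝ)..t, f u = 1 - survival c f t := by
    rw [← hf_int, ← cumulative_add_survival hf ht, cumulative, add_sub_cancel_right]
  have hSwv := survival_antitoneOn hf hf₀ hw' hv' hwv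
  refine mul_le_mul_of_div_le_div_of_le hSwv (survival_nonneg hf₀ hv') (hf₀ v hv') fun hSv => ?_
  have := hMHR w hw' v hv' hwv (by rw [hcdf hw']; linarith) (by rw [hcdf hv']; linarith)
  rwa [hcdf hw', hcdf hv', sub_sub_cancel, sub_sub_cancel] at this

lemma MonotoneHazard.congr (h : MonotoneHazard c f) (hfg : EqOn f g (Icc 0 c)) :
    MonotoneHazard c g := by
  intro w v hw hwv hvc
  have hw' : w ∈ Icc 0 c := ⟨hw, hwv.trans hvc⟩
  have hv' : v ∈ Icc 0 c := ⟨hw.trans hwv, hvc⟩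
  rw [← survival_congr hfg hw', ← survival_congr hfg hv', ← hfg hw', ← hfg hv']
  exact h hw hwv hvc

lemma gRev_eq_survival (c : ℝ) (f : ℝ → ℝ) (x l : ℝ) :
    gRev c f x l = (∫ v in (0 : ℝ)..c, v * x * survival c f (v * x) * f v)
      + l * ∫ v in (0 : ℝ)..(c * x), v / x * survival c f (v / x) * f v := rfl

lemma gRev_congr (hc : 0 ≤ c) (hfg : EqOn f g (Icc 0 c)) {x : ℝ} (hx : x ∈ Icc 0 1) (l : ℝ) :
    gRev c f x l = gRev c g x l := by
  rcases hx.1.eq_or_lt with rfl | hx₀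
  · simp [gRev]
  rw [gRev_eq_survival, gRev_eq_survival]
  refine congrArg₂ (· + l * ·) ?_ ?_
  · refine intervalIntegral.integral_congr fun v hv => ?_
    rw [uIcc_of_le hc] at hv
    have hvx : v * x ∈ Icc 0 c :=
      ⟨mul_nonneg hv.1 hx.1, (mul_le_of_le_one_right hv.1 hx.2).trans hv.2⟩
    simp only [survival_congr hfg hvx, hfg hv]
  · refine intervalIntegral.integral_congr fun v hv => ?_
    rw [uIcc_of_le (mul_nonneg hc hx.1)] at hv
    have hvx : v / x ∈ Icc 0 c := ⟨div_nonneg hv.1 hx.1, (div_le_iff₀ hx₀).2 hv.2⟩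
    have hv' : v ∈ Icc 0 c := ⟨hv.1, hv.2.trans (mul_le_of_le_one_right hc hx.2)⟩
    simp only [survival_congr hfg hvx, hfg hv']

lemma integral_div_mul_survival (hf : Continuous f) {x : ℝ} (hx : 0 < x) :
    ∫ v in (0 : ℝ)..(c * x), v / x * survival c f (v / x) * f v
      = ∫ v in (0 : ℝ)..c, (v * f v - survival c f v) * cumulative f (v * x) := by
  have hS := continuous_survival (c := c) hf
  have hsubst := intervalIntegral.integral_comp_mul_right (a := 0) (b := c)
    (fun v => v / x * survival c f (v / x) * f v) hx.ne'
  simp only [zero_mul, mul_div_cancel_right₀ _ hx.ne', smul_eq_mul] at hsubst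
  have hparts := intervalIntegral.integral_mul_deriv_eq_deriv_mul (a := 0) (b := c)
    (u := fun v => v * survival c f v) (u' := fun v => survival c f v - v * f v)
    (v := fun v => cumulative f (v * x)) (v' := fun v => x * f (v * x))
    (fun v _ => ((hasDerivAt_id' v).mul (hasDerivAt_survival hf v)).congr_deriv (by ring))
    (fun v _ => by
      have := (hasDerivAt_cumulative hf (v * x)).comp v ((hasDerivAt_id' v).mul_const x)
      exact this.congr_deriv (by ring))
    (Continuous.intervalIntegrable (by fun_prop) _ _)
    (Continuous.intervalIntegrable (by fun_prop) _ _)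
  calc ∫ v in (0 : ℝ)..(c * x), v / x * survival c f (v / x) * f v
      = x * ∫ v in (0 : ℝ)..c, v * survival c f v * f (v * x) := by
        rw [hsubst, mul_inv_cancel_left₀ hx.ne']
    _ = ∫ v in (0 : ℝ)..c, (v * survival c f v) * (x * f (v * x)) := by
        rw [← intervalIntegral.integral_const_mul]
        exact intervalIntegral.integral_congr fun v _ => by ring
    _ = _ := by
        rw [hparts, survival_self, mul_zero, zero_mul, zero_mul, zero_mul, sub_zero, zero_sub,
          ← intervalIntegral.integral_neg]
        exact intervalIntegral.integral_congr fun v _ => by ring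

/-- The integrand of `x ↦ gRev c f x l` once its second term has been rewritten by
`integral_div_mul_survival`; unlike `gRev`, it depends smoothly on `x`. -/
noncomputable def revenueIntegrand (c : ℝ) (f : ℝ → ℝ) (l x v : ℝ) : ℝ :=
  v * x * survival c f (v * x) * f v + l * ((v * f v - survival c f v) * cumulative f (v * x))

noncomputable def revenueIntegrandDeriv (c : ℝ) (f : ℝ → ℝ) (l x v : ℝ) : ℝ :=
  (v * survival c f (v * x) - v ^ 2 * x * f (v * x)) * f v
    + l * ((v * f v - survival c f v) * (v * f (v * x)))

lemma gRev_eq_integral_revenueIntegrand (hf : Continuous f) {x : ℝ} (hx : 0 ≤ x) (l : ℝ) :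
    gRev c f x l = ∫ v in (0 : ℝ)..c, revenueIntegrand c f l x v := by
  rcases hx.eq_or_lt with rfl | hx
  · simp [gRev, revenueIntegrand]
  have hS := continuous_survival (c := c) hf
  have hF := continuous_cumulative hf
  rw [gRev_eq_survival, integral_div_mul_survival hf hx, ← intervalIntegral.integral_const_mul,
    ← intervalIntegral.integral_add (Continuous.intervalIntegrable (by fun_prop) _ _)
      (Continuous.intervalIntegrable (by fun_prop) _ _)]
  rfl

lemma hasDerivAt_integral_revenueIntegrand (hf : Continuous f) (l x₀ : ℝ) :
    HasDerivAt (fun x => ∫ v in (0 : ℝ)..c, revenueIntegrand c f l x v)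
      (∫ v in (0 : ℝ)..c, revenueIntegrandDeriv c f l x₀ v) x₀ := by
  have hS := continuous_survival (c := c) hf
  have hF := continuous_cumulative hf
  refine hasDerivAt_intervalIntegral_of_continuous
    (by unfold revenueIntegrand; fun_prop) (by unfold revenueIntegrandDeriv; fun_prop)
    (fun x v => ?_) x₀
  have hvx : HasDerivAt (fun x => v * x) v x := by simpa using (hasDerivAt_id x).const_mul v
  have hS' := (hasDerivAt_survival (c := c) hf (v * x)).comp x hvx
  have hF' := (hasDerivAt_cumulative hf (v * x)).comp x hvx
  exact ((((hvx.mul hS').mul_const (f v)).add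
    ((hF'.const_mul (v * f v - survival c f v)).const_mul l))).congr_deriv
    (by simp only [revenueIntegrandDeriv, Function.comp_apply]; ring)

lemma mul_survival_mul_le_revenueIntegrandDeriv (hf : ContinuousOn f (Icc 0 c))
    (hf₀ : ∀ v ∈ Icc 0 c, 0 ≤ f v) (hmh : MonotoneHazard c f) {l x v : ℝ} (hl : l < 1)
    (hx : x ∈ Icc 0 l) (hv : v ∈ Icc 0 c) :
    (1 - l) * (v * survival c f v * f v) ≤ revenueIntegrandDeriv c f l x v := by
  have hvx : v * x ≤ v := mul_le_of_le_one_right hv.1 (hx.2.trans hl.le)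
  have hvx' : v * x ∈ Icc 0 c := ⟨mul_nonneg hv.1 hx.1, hvx.trans hv.2⟩
  have hcross := hmh hvx'.1 hvx hv.2
  have hanti := survival_antitoneOn hf hf₀ hvx' hv hvx
  have hsplit : revenueIntegrandDeriv c f l x v - (1 - l) * (v * survival c f v * f v)
      = v * (l * (survival c f (v * x) * f v - survival c f v * f (v * x))
        + (1 - l) * ((survival c f (v * x) - survival c f v) * f v)
        + (l - x) * (v * (f v * f (v * x)))) := by
    unfold revenueIntegrandDeriv; ring
  have hfv := hf₀ v hv
  have hfvx := hf₀ _ hvx'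
  have : 0 ≤ revenueIntegrandDeriv c f l x v - (1 - l) * (v * survival c f v * f v) := by
    rw [hsplit]
    refine mul_nonneg hv.1 (add_nonneg (add_nonneg ?_ ?_) ?_)
    · exact mul_nonneg (hx.1.trans hx.2) (sub_nonneg.2 hcross)
    · exact mul_nonneg (sub_nonneg.2 hl.le) (mul_nonneg (sub_nonneg.2 hanti) hfv)
    · exact mul_nonneg (sub_nonneg.2 hx.2) (mul_nonneg hv.1 (mul_nonneg hfv hfvx))
  linarith

lemma integral_mul_survival_mul (hf : Continuous f) :
    ∫ v in (0 : ℝ)..c, v * survival c f v * f v = (∫ v in (0 : ℝ)..c, survival c f v ^ 2) / 2 := by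
  have hS := continuous_survival (c := c) hf
  have hparts := intervalIntegral.integral_mul_deriv_eq_deriv_mul (a := 0) (b := c)
    (u := id) (u' := fun _ => 1)
    (v := fun v => -(survival c f v ^ 2 / 2)) (v' := fun v => survival c f v * f v)
    (fun v _ => hasDerivAt_id v)
    (fun v _ => (((hasDerivAt_survival hf v).pow 2).div_const 2).neg.congr_deriv (by ring))
    intervalIntegrable_const (Continuous.intervalIntegrable (by fun_prop) _ _)
  simp only [id, survival_self, one_mul, intervalIntegral.integral_neg,
    intervalIntegral.integral_div] at hparts
  simp only [mul_assoc, hparts]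
  ring

lemma integral_mul_survival_mul_pos (hc : 0 < c) (hf : Continuous f)
    (hS₀ : survival c f 0 ≠ 0) : 0 < ∫ v in (0 : ℝ)..c, v * survival c f v * f v := by
  have hS := continuous_survival (c := c) hf
  rw [integral_mul_survival_mul hf]
  exact half_pos (intervalIntegral.integral_pos hc (by fun_prop) (fun v _ => sq_nonneg _)
    ⟨0, left_mem_Icc.2 hc.le, by positivity⟩)

lemma integral_revenueIntegrandDeriv_pos (hc : 0 < c) (hf : Continuous f)
    (hf₀ : ∀ v ∈ Icc 0 c, 0 ≤ f v) (hmh : MonotoneHazard c f) (hS₀ : survival c f 0 ≠ 0)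
    {l x : ℝ} (hl : l < 1) (hx : x ∈ Icc 0 l) :
    0 < ∫ v in (0 : ℝ)..c, revenueIntegrandDeriv c f l x v := by
  have hS := continuous_survival (c := c) hf
  calc 0 < (1 - l) * ∫ v in (0 : ℝ)..c, v * survival c f v * f v :=
        mul_pos (sub_pos.2 hl) (integral_mul_survival_mul_pos hc hf hS₀)
    _ = ∫ v in (0 : ℝ)..c, (1 - l) * (v * survival c f v * f v) :=
        (intervalIntegral.integral_const_mul _ _).symm
    _ ≤ ∫ v in (0 : ℝ)..c, revenueIntegrandDeriv c f l x v :=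
        intervalIntegral.integral_mono_on hc.le (Continuous.intervalIntegrable (by fun_prop) _ _)
          (Continuous.intervalIntegrable (by unfold revenueIntegrandDeriv; fun_prop) _ _)
          fun v hv => mul_survival_mul_le_revenueIntegrandDeriv hf.continuousOn hf₀ hmh hl hx hv

theorem strictMonoOn_gRev (hc : 0 < c) (hf : Continuous f) (hf₀ : ∀ v ∈ Icc 0 c, 0 ≤ f v)
    (hmh : MonotoneHazard c f) (hS₀ : survival c f 0 ≠ 0) {l : ℝ} (hl : l < 1) :
    StrictMonoOn (fun x => gRev c f x l) (Icc 0 l) := by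
  have hderiv := hasDerivAt_integral_revenueIntegrand (c := c) hf l
  refine StrictMonoOn.congr (f₁ := fun x => ∫ v in (0 : ℝ)..c, revenueIntegrand c f l x v)
    ?_ fun x hx => (gRev_eq_integral_revenueIntegrand hf hx.1 l).symm
  refine strictMonoOn_of_deriv_pos (convex_Icc 0 l)
    (fun x _ => (hderiv x).continuousAt.continuousWithinAt) fun x hx => ?_
  rw [interior_Icc] at hx
  rw [(hderiv x).deriv]
  exact integral_revenueIntegrandDeriv_pos hc hf hf₀ hmh hS₀ hl (Ioo_subset_Icc_self hx)

theorem lt_of_isMaxOn_gRev (hc : 0 < c) (hf : Continuous f) (hf₀ : ∀ v ∈ Icc 0 c, 0 ≤ f v)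
    (hmh : MonotoneHazard c f) (hS₀ : survival c f 0 ≠ 0) {l xs : ℝ} (hl : l < 1)
    (hxs : xs ∈ Icc 0 1) (hmax : IsMaxOn (fun x => gRev c f x l) (Icc 0 1) xs) : l < xs := by
  by_contra! hle
  have hmax' : IsMaxOn (fun x => ∫ v in (0 : ℝ)..c, revenueIntegrand c f l x v) (Icc 0 1) xs :=
    isMaxOn_iff.2 fun x hx => by
      simpa only [gRev_eq_integral_revenueIntegrand hf hx.1,
        gRev_eq_integral_revenueIntegrand hf hxs.1] using isMaxOn_iff.1 hmax x hx
  exact (integral_revenueIntegrandDeriv_pos hc hf hf₀ hmh hS₀ hl ⟨hxs.1, hle⟩).not_ge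
    (hmax'.hasDerivAt_nonpos (hasDerivAt_integral_revenueIntegrand hf l xs) (hle.trans_lt hl)
      (Icc_subset_Icc hxs.1 le_rfl))

end SignalRatio

/-- For a continuous MHR density `f` on `[0,c]` and low CTR `l ∈ [0,1)`, every maximizer
`x*` of `g_f(·,l)` on `[0,1]` satisfies `x* > l`; in particular `g_f(·,l)` is strictly
increasing on `[0,l]`. -/
theorem optimal_signal_ratio_gt_l (c : ℝ) (hc : 0 < c) (f : ℝ → ℝ)
    (hf_cont : ContinuousOn f (Set.Icc 0 c))
    (hf_nonneg : ∀ v ∈ Set.Icc (0 : ℝ) c, 0 ≤ f v)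
    (hf_int : (∫ v in (0 : ℝ)..c, f v) = 1)
    (hMHR : ∀ v₁ ∈ Set.Icc (0 : ℝ) c, ∀ v₂ ∈ Set.Icc (0 : ℝ) c, v₁ ≤ v₂ →
      (∫ u in (0 : ℝ)..v₁, f u) < 1 → (∫ u in (0 : ℝ)..v₂, f u) < 1 →
      f v₁ / (1 - ∫ u in (0 : ℝ)..v₁, f u) ≤ f v₂ / (1 - ∫ u in (0 : ℝ)..v₂, f u))
    (l : ℝ) (hl : l ∈ Set.Ico (0 : ℝ) 1) :
    (∀ xstar ∈ Set.Icc (0 : ℝ) 1,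
        (∀ x ∈ Set.Icc (0 : ℝ) 1, gRev c f x l ≤ gRev c f xstar l) → l < xstar)
    ∧ StrictMonoOn (fun x => gRev c f x l) (Set.Icc 0 l) := by
  set g : ℝ → ℝ := IccExtend hc.le ((Icc 0 c).domRestrict f)
  have hg : Continuous g := (continuousOn_iff_continuous_domRestrict.1 hf_cont).Icc_extend'
  have hgf : EqOn g f (Icc 0 c) := fun v hv => IccExtend_of_mem hc.le _ hv
  have hg₀ : ∀ v ∈ Icc 0 c, 0 ≤ g v := fun v hv => hgf hv ▸ hf_nonneg v hv
  have hmh : SignalRatio.MonotoneHazard c g :=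
    (SignalRatio.monotoneHazard_of_hazardRate_mono hf_cont hf_nonneg hf_int hMHR).congr hgf.symm
  have hS₀ : SignalRatio.survival c g 0 ≠ 0 := by
    rw [SignalRatio.survival_congr hgf (left_mem_Icc.2 hc.le)]
    exact hf_int.trans_ne one_ne_zero
  have hrev : EqOn (fun x => gRev c g x l) (fun x => gRev c f x l) (Icc 0 1) :=
    fun x hx => SignalRatio.gRev_congr hc.le hgf hx l
  refine ⟨fun xs hxs hmax => SignalRatio.lt_of_isMaxOn_gRev hc hg hg₀ hmh hS₀ hl.2 hxs ?_,
    (SignalRatio.strictMonoOn_gRev hc hg hg₀ hmh hS₀ hl.2).congr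
      (hrev.mono (Icc_subset_Icc le_rfl hl.2.le))⟩
  exact isMaxOn_iff.2 fun x hx => by simpa only [hrev hx, hrev hxs] using hmax x hx
end

section
/- Let λ > 0, l ∈ [0,1] and s₁, s₂ > 0. Then ∫₀^∞ (v·s₂/s₁)·(∫_{v·s₂/s₁}^∞ λ·e^{−λu} du)·λ·e^{−λv} dv + l·∫₀^∞ (v·s₁/s₂)·(∫_{v·s₁/s₂}^∞ λ·e^{−λu} du)·λ·e^{−λv} dv = ((1+l)/λ)·(s₁·s₂)/(s₁+s₂)². Consequently this quantity is at most (1+l)/(4λ), with equality if and only if s₁ = s₂. -/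
/-!
The tail of the exponential distribution at `x` is `e^{-λx}`, so each term of the revenue is a
Gamma(2) integral: `∫ v (a/b) e^{-λ(a/b)v} λ e^{-λv} dv = ab / (λ(a+b)²)`. Summing the two terms
gives `((1+l)/λ) · s₁s₂/(s₁+s₂)²`, and AM-GM `4ab ≤ (a+b)²` gives the bound and its equality case.
-/

open MeasureTheory Set Real

/-- Expected revenue of the two-bidder click-through auction with CTR pair `(1,l)`,
i.i.d. exponential values with rate `lam`, and signals `(s₁, s₂)`. -/
noncomputable def expRev (lam l s₁ s₂ : ℝ) : ℝ :=
  (∫ v in Set.Ioi (0 : ℝ),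
      (v * s₂ / s₁) * (∫ u in Set.Ioi (v * s₂ / s₁), lam * Real.exp (-lam * u))
        * (lam * Real.exp (-lam * v)))
  + l * ∫ v in Set.Ioi (0 : ℝ),
      (v * s₁ / s₂) * (∫ u in Set.Ioi (v * s₁ / s₂), lam * Real.exp (-lam * u))
        * (lam * Real.exp (-lam * v))

lemma integral_const_mul_exp_neg_mul_Ioi {lam : ℝ} (hlam : 0 < lam) (a : ℝ) :
    ∫ u in Ioi a, lam * exp (-lam * u) = exp (-lam * a) := by
  rw [integral_const_mul, integral_exp_mul_Ioi (neg_lt_zero.mpr hlam)]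
  field_simp

lemma integral_mul_exp_neg_mul_Ioi {r : ℝ} (hr : 0 < r) :
    ∫ t in Ioi (0 : ℝ), t * exp (-(r * t)) = 1 / r ^ 2 := by
  have h := integral_rpow_mul_exp_neg_mul_Ioi two_pos hr
  norm_num [Gamma_two] at h
  simpa [← div_pow] using h

lemma integral_Ioi_bid_mul_tail {lam a b : ℝ} (hlam : 0 < lam) (ha : 0 < a) (hb : 0 < b) :
    ∫ v in Ioi (0 : ℝ), (v * a / b) * (∫ u in Ioi (v * a / b), lam * exp (-lam * u))
        * (lam * exp (-lam * v)) = a * b / (lam * (a + b) ^ 2) := by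
  have hrate : 0 < lam * (a + b) / b := by positivity
  have hintegrand : ∀ v : ℝ, (v * a / b) * (∫ u in Ioi (v * a / b), lam * exp (-lam * u))
      * (lam * exp (-lam * v)) = lam * a / b * (v * exp (-(lam * (a + b) / b * v))) := by
    intro v
    rw [integral_const_mul_exp_neg_mul_Ioi hlam,
      show -(lam * (a + b) / b * v) = -lam * (v * a / b) + -lam * v by field_simp; ring, exp_add]
    ring
  simp_rw [hintegrand]
  rw [integral_const_mul, integral_mul_exp_neg_mul_Ioi hrate]
  field_simp

lemma mul_div_add_sq_le_quarter (a b : ℝ) : a * b / (a + b) ^ 2 ≤ 1 / 4 := by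
  rcases eq_or_ne (a + b) 0 with h | h
  · simp [h]
  · rw [div_le_div_iff₀ (by positivity) four_pos]
    nlinarith [sq_nonneg (a - b)]

lemma mul_div_add_sq_eq_quarter_iff {a b : ℝ} (h : a + b ≠ 0) :
    a * b / (a + b) ^ 2 = 1 / 4 ↔ a = b := by
  rw [div_eq_div_iff (by positivity) four_ne_zero, ← sub_eq_zero]
  constructor
  · intro hab
    nlinarith [sq_nonneg (a - b)]
  · rintro rfl
    ring

/-- For exponential values, the expected revenue equals `((1+l)/λ)·s₁s₂/(s₁+s₂)²`; hence
it is at most `(1+l)/(4λ)`, with equality iff the two signals are equal (so revealing no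
information is optimal). -/
theorem expRev_eq_and_max (lam l s₁ s₂ : ℝ) (hlam : 0 < lam)
    (hl : l ∈ Set.Icc (0 : ℝ) 1) (hs₁ : 0 < s₁) (hs₂ : 0 < s₂) :
    expRev lam l s₁ s₂ = ((1 + l) / lam) * (s₁ * s₂) / (s₁ + s₂) ^ 2
    ∧ expRev lam l s₁ s₂ ≤ (1 + l) / (4 * lam)
    ∧ (expRev lam l s₁ s₂ = (1 + l) / (4 * lam) ↔ s₁ = s₂) := by
  have hrev : expRev lam l s₁ s₂ = (1 + l) / lam * (s₁ * s₂ / (s₁ + s₂) ^ 2) := by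
    rw [expRev, integral_Ioi_bid_mul_tail hlam hs₂ hs₁, integral_Ioi_bid_mul_tail hlam hs₁ hs₂]
    field_simp
    ring
  have hscale : 0 < (1 + l) / lam := div_pos (by linarith [hl.1]) hlam
  have hmax : (1 + l) / (4 * lam) = (1 + l) / lam * (1 / 4) := by field_simp
  refine ⟨by rw [hrev]; ring, ?_, ?_⟩
  · rw [hrev, hmax]
    exact mul_le_mul_of_nonneg_left (mul_div_add_sq_le_quarter s₁ s₂) hscale.le
  · rw [hrev, hmax, mul_right_inj' hscale.ne']
    exact mul_div_add_sq_eq_quarter_iff (by positivity)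
end

section
/- Let c > 0, l ∈ [0,1] and x ∈ (0,1]. Then ∫₀ᶜ v·x·(∫_{v·x}^c (1/c) du)·(1/c) dv + l·∫₀^{c·x} (v/x)·(∫_{v/x}^c (1/c) du)·(1/c) dv = c·(x/2 − x²/3 + l·x/6). Moreover, extending this expression to x = 0 by the value 0, the function x ↦ c·(x/2 − x²/3 + l·x/6) attains its maximum over x ∈ [0,1] uniquely at x = (3+l)/4, with maximum value c·(3+l)²/48. -/
open MeasureTheory Set

/-!
Integrating out the opponent's value, the probability that it exceeds a threshold `a` is
`1 - a / c`, so both slot revenues are integrals of quadratics in `v`: the first slot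
contributes `c (x/2 - x²/3)` and the second `c x / 6`. The resulting revenue curve is the
concave parabola `c (3+l)²/48 - (c/3) (y - (3+l)/4)²`, read off by completing the square.
-/

theorem integral_mul_sub_mul (m k b : ℝ) :
    ∫ v in (0 : ℝ)..b, v * (m - k * v) = m * b ^ 2 / 2 - k * b ^ 3 / 3 := by
  have hpoly : (fun v : ℝ => v * (m - k * v)) = fun v => m * v - k * v ^ 2 := by
    ext v; ring
  rw [hpoly, intervalIntegral.integral_sub (intervalIntegral.intervalIntegrable_id.const_mul m)
      ((intervalIntegral.intervalIntegrable_pow 2).const_mul k),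
    intervalIntegral.integral_const_mul, intervalIntegral.integral_const_mul, integral_id,
    integral_pow]
  ring

theorem integral_one_div_upper (a c : ℝ) (hc : c ≠ 0) : ∫ _u in a..c, 1 / c = 1 - a / c := by
  rw [intervalIntegral.integral_const, smul_eq_mul]
  field_simp

theorem uniform_high_slot_revenue {c : ℝ} (x : ℝ) (hc : c ≠ 0) :
    ∫ v in (0 : ℝ)..c, v * x * (∫ _u in (v * x)..c, (1 / c)) * (1 / c)
      = c * (x / 2 - x ^ 2 / 3) := by
  have hintegrand : ∀ v : ℝ, v * x * (∫ _u in (v * x)..c, (1 / c)) * (1 / c)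
      = x / c ^ 2 * (v * (c - x * v)) := by
    intro v
    rw [integral_one_div_upper _ _ hc]
    field_simp
  simp_rw [hintegrand, intervalIntegral.integral_const_mul, integral_mul_sub_mul]
  field_simp

theorem uniform_low_slot_revenue {c x : ℝ} (hc : c ≠ 0) (hx : x ≠ 0) :
    ∫ v in (0 : ℝ)..(c * x), (v / x) * (∫ _u in (v / x)..c, (1 / c)) * (1 / c)
      = c * x / 6 := by
  have hintegrand : ∀ v : ℝ, (v / x) * (∫ _u in (v / x)..c, (1 / c)) * (1 / c)
      = 1 / (x * c ^ 2) * (v * (c - x⁻¹ * v)) := by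
    intro v
    rw [integral_one_div_upper _ _ hc]
    field_simp
  simp_rw [hintegrand, intervalIntegral.integral_const_mul, integral_mul_sub_mul]
  field_simp
  ring

theorem revenue_curve_eq_max_sub_sq (c l y : ℝ) :
    c * (y / 2 - y ^ 2 / 3 + l * y / 6)
      = c * (3 + l) ^ 2 / 48 - c / 3 * (y - (3 + l) / 4) ^ 2 := by
  ring

theorem uniform_revenue_formula_and_max_general (c l x : ℝ) (hc : 0 < c)
    (hx : x ∈ Set.Ioc (0 : ℝ) 1) :
    ((∫ v in (0 : ℝ)..c, v * x * (∫ _u in (v * x)..c, (1 / c)) * (1 / c))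
        + l * ∫ v in (0 : ℝ)..(c * x), (v / x) * (∫ _u in (v / x)..c, (1 / c)) * (1 / c))
      = c * (x / 2 - x ^ 2 / 3 + l * x / 6)
    ∧ c * (((3 + l) / 4) / 2 - ((3 + l) / 4) ^ 2 / 3 + l * ((3 + l) / 4) / 6)
        = c * (3 + l) ^ 2 / 48
    ∧ (∀ y ∈ Set.Icc (0 : ℝ) 1,
        c * (y / 2 - y ^ 2 / 3 + l * y / 6) ≤ c * (3 + l) ^ 2 / 48)
    ∧ (∀ y ∈ Set.Icc (0 : ℝ) 1,
        c * (y / 2 - y ^ 2 / 3 + l * y / 6) = c * (3 + l) ^ 2 / 48 → y = (3 + l) / 4) := by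
  refine ⟨?_, by ring, fun y _ => ?_, fun y _ hy => ?_⟩
  · rw [uniform_high_slot_revenue x hc.ne', uniform_low_slot_revenue hc.ne' hx.1.ne']
    ring
  · rw [revenue_curve_eq_max_sub_sq]
    have : 0 ≤ c / 3 * (y - (3 + l) / 4) ^ 2 := by positivity
    linarith
  · rw [revenue_curve_eq_max_sub_sq, sub_eq_self] at hy
    have hsq : (y - (3 + l) / 4) ^ 2 = 0 := by
      simpa [hc.ne'] using hy
    linarith [pow_eq_zero_iff two_ne_zero |>.mp hsq]

/-- Under the uniform density `1/c` on `[0,c]`, the expected revenue at signal ratio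
`x ∈ (0,1]` and low CTR `l ∈ [0,1]` equals `c·(x/2 − x²/3 + l·x/6)`; moreover the
function `y ↦ c·(y/2 − y²/3 + l·y/6)` attains its maximum over `[0,1]` uniquely at
`y = (3+l)/4`, where it equals `c·(3+l)²/48`. -/
theorem uniform_revenue_formula_and_max (c l x : ℝ) (hc : 0 < c)
    (hl : l ∈ Set.Icc (0 : ℝ) 1) (hx : x ∈ Set.Ioc (0 : ℝ) 1) :
    ((∫ v in (0 : ℝ)..c, v * x * (∫ _u in (v * x)..c, (1 / c)) * (1 / c))
        + l * ∫ v in (0 : ℝ)..(c * x), (v / x) * (∫ _u in (v / x)..c, (1 / c)) * (1 / c))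
      = c * (x / 2 - x ^ 2 / 3 + l * x / 6)
    ∧ c * (((3 + l) / 4) / 2 - ((3 + l) / 4) ^ 2 / 3 + l * ((3 + l) / 4) / 6)
        = c * (3 + l) ^ 2 / 48
    ∧ (∀ y ∈ Set.Icc (0 : ℝ) 1,
        c * (y / 2 - y ^ 2 / 3 + l * y / 6) ≤ c * (3 + l) ^ 2 / 48)
    ∧ (∀ y ∈ Set.Icc (0 : ℝ) 1,
        c * (y / 2 - y ^ 2 / 3 + l * y / 6) = c * (3 + l) ^ 2 / 48 → y = (3 + l) / 4) :=
  uniform_revenue_formula_and_max_general c l x hc hx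
end

section
/- For every l ∈ [0,1] and every x ∈ [0,1]: x/2 − x²/3 + l·x/6 ≤ (9/8)·(1/2 − 1/3 + l/6). Equivalently, under a uniform value distribution the expected revenue at signal ratio 1 is at least 8/9 of the maximum expected revenue over all signal ratios x ∈ [0,1]. -/
/-! The revenue curve `x ↦ x/2 − x²/3 + l·x/6` is a downward parabola with vertex value
`(3+l)²/48`, so it is bounded by that value for every real `x`. It remains to compare
`(3+l)²/48` with `(9/8)·(1+l)/6 = 3(1+l)/16`; clearing denominators this is
`(3+l)² ≤ 9(1+l)`, i.e. `l(l − 3) ≤ 0`, which holds for `0 ≤ l ≤ 3`. -/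

theorem revenue_vertex_sub_revenue (l x : ℝ) :
    (3 + l) ^ 2 / 48 - (x / 2 - x ^ 2 / 3 + l * x / 6) = (x - (3 + l) / 4) ^ 2 / 3 := by
  ring

theorem revenue_le_vertex (l x : ℝ) :
    x / 2 - x ^ 2 / 3 + l * x / 6 ≤ (3 + l) ^ 2 / 48 := by
  have h := revenue_vertex_sub_revenue l x
  have : 0 ≤ (x - (3 + l) / 4) ^ 2 / 3 := by positivity
  linarith

theorem vertex_le_nine_eighths_revenue_one {l : ℝ} (hl₀ : 0 ≤ l) (hl₃ : l ≤ 3) :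
    (3 + l) ^ 2 / 48 ≤ (9 / 8) * (1 / 2 - 1 / 3 + l / 6) := by
  nlinarith [mul_nonneg hl₀ (sub_nonneg.2 hl₃)]

theorem uniform_ratio_one_approx_general (l x : ℝ) (hl : l ∈ Set.Icc (0 : ℝ) 1) :
    x / 2 - x ^ 2 / 3 + l * x / 6 ≤ (9 / 8) * (1 / 2 - 1 / 3 + l / 6) :=
  (revenue_le_vertex l x).trans
    (vertex_le_nine_eighths_revenue_one hl.1 (hl.2.trans (by norm_num)))

/-- Under a uniform value distribution, the expected revenue at signal ratio `1` is at
least `8/9` of the maximum expected revenue over all signal ratios `x ∈ [0,1]`: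
`x/2 − x²/3 + l·x/6 ≤ (9/8)·(1/2 − 1/3 + l/6)`. -/
theorem uniform_ratio_one_approx (l x : ℝ) (hl : l ∈ Set.Icc (0 : ℝ) 1)
    (hx : x ∈ Set.Icc (0 : ℝ) 1) :
    x / 2 - x ^ 2 / 3 + l * x / 6 ≤ (9 / 8) * (1 / 2 - 1 / 3 + l / 6) :=
  uniform_ratio_one_approx_general l x hl
end

section
/- Let c > 0 and let f be a probability density on [0,c] satisfying 0 < f̲ ≤ f(v) ≤ f̄ for all v ∈ [0,c]. Then for every l ∈ [0,1] and every x ∈ (0,1]: (f̲·c)²·c·(x/2 − x²/3 + l·x/6) ≤ g_f(x,l) ≤ (f̄·c)²·c·(x/2 − x²/3 + l·x/6), where c·(x/2 − x²/3 + l·x/6) is the corresponding expected revenue under the uniform density 1/c on [0,c]. -/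
/-!
On `[0, c]` the tail mass `∫_t^c f` lies between `f̲ (c - t)` and `f̄ (c - t)`, and `f v`
between `f̲` and `f̄`. Hence each integrand `s · (∫_s^c f) · f v` of `g_f`, with `s = v x`
resp. `s = v / x`, lies pointwise between `f̲² s (c - s)` and `f̄² s (c - s)`. The two integrals
of `s (c - s)` are `c³ (x/2 - x²/3)` and `c³ x / 6`, so the bounds are `f̲² c²` resp. `f̄² c²`
times the uniform revenue `c (x/2 - x²/3 + l x/6)`.
-/

open MeasureTheory Set

open intervalIntegral

section ConstantBounds

variable {f : ℝ → ℝ} {a b m M : ℝ}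

theorem mul_sub_le_integral_of_forall_le (hab : a ≤ b) (hf : IntervalIntegrable f volume a b)
    (h : ∀ v ∈ Icc a b, m ≤ f v) : m * (b - a) ≤ ∫ v in a..b, f v := by
  simpa [mul_comm] using integral_mono_on hab intervalIntegrable_const hf h

theorem integral_le_mul_sub_of_forall_le (hab : a ≤ b) (hf : IntervalIntegrable f volume a b)
    (h : ∀ v ∈ Icc a b, f v ≤ M) : ∫ v in a..b, f v ≤ M * (b - a) := by
  simpa [mul_comm] using integral_mono_on hab hf intervalIntegrable_const h

end ConstantBounds

theorem mul_mul_mem_Icc_of_mem_Icc {t d g y m M : ℝ} (ht : 0 ≤ t) (hd : 0 ≤ d) (hm : 0 ≤ m)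
    (hg : g ∈ Icc (m * d) (M * d)) (hy : y ∈ Icc m M) :
    t * g * y ∈ Icc (m ^ 2 * (t * d)) (M ^ 2 * (t * d)) := by
  have hmd : 0 ≤ m * d := mul_nonneg hm hd
  have hMd : 0 ≤ M * d := hmd.trans (hg.1.trans hg.2)
  constructor
  · calc m ^ 2 * (t * d) = t * (m * d) * m := by ring
      _ ≤ t * g * y := mul_le_mul (mul_le_mul_of_nonneg_left hg.1 ht) hy.1 hm
          (mul_nonneg ht (hmd.trans hg.1))
  · calc t * g * y ≤ t * (M * d) * M := mul_le_mul (mul_le_mul_of_nonneg_left hg.2 ht) hy.2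
          (hm.trans hy.1) (mul_nonneg ht hMd)
      _ = M ^ 2 * (t * d) := by ring

theorem integral_mul_tail_integral_mul_mem_Icc {f s : ℝ → ℝ} {b c m M : ℝ} (hb : 0 ≤ b)
    (hbc : b ≤ c) (hm : 0 ≤ m) (hf : IntervalIntegrable f volume 0 c)
    (hf_mem : ∀ v ∈ Icc 0 c, f v ∈ Icc m M) (hs : ContinuousOn s (Icc 0 b))
    (hs_maps : MapsTo s (Icc 0 b) (Icc 0 c)) :
    (∫ v in 0..b, s v * (∫ u in s v..c, f u) * f v) ∈
      Icc (m ^ 2 * ∫ v in 0..b, s v * (c - s v)) (M ^ 2 * ∫ v in 0..b, s v * (c - s v)) := by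
  set G : ℝ → ℝ := fun t => ∫ u in t..c, f u
  have hG : ∀ t ∈ Icc 0 c, G t ∈ Icc (m * (c - t)) (M * (c - t)) := fun t ht =>
    have hft : IntervalIntegrable f volume t c :=
      hf.mono_set (uIcc_subset_uIcc (Icc_subset_uIcc ht) right_mem_uIcc)
    have hf_mem' : ∀ v ∈ Icc t c, f v ∈ Icc m M := fun v hv => hf_mem v ⟨ht.1.trans hv.1, hv.2⟩
    ⟨mul_sub_le_integral_of_forall_le ht.2 hft fun v hv => (hf_mem' v hv).1,
      integral_le_mul_sub_of_forall_le ht.2 hft fun v hv => (hf_mem' v hv).2⟩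
  have hG_cont : ContinuousOn G (Icc 0 c) := by
    rw [← uIcc_of_le (hb.trans hbc)]
    exact continuousOn_primitive_interval_left ((intervalIntegrable_iff' (f := f)).1 hf)
  have hpointwise : ∀ v ∈ Icc 0 b,
      s v * G (s v) * f v ∈ Icc (m ^ 2 * (s v * (c - s v))) (M ^ 2 * (s v * (c - s v))) :=
    fun v hv => mul_mul_mem_Icc_of_mem_Icc (hs_maps hv).1 (sub_nonneg.2 (hs_maps hv).2) hm
      (hG _ (hs_maps hv)) (hf_mem v ⟨hv.1, hv.2.trans hbc⟩)
  have hint : IntervalIntegrable (fun v => s v * G (s v) * f v) volume 0 b :=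
    (hf.mono_set (uIcc_subset_uIcc left_mem_uIcc (Icc_subset_uIcc ⟨hb, hbc⟩))).continuousOn_mul
      (by rw [uIcc_of_le hb]; exact hs.mul (hG_cont.comp hs hs_maps))
  have hbound_int (k : ℝ) : IntervalIntegrable (fun v => k * (s v * (c - s v))) volume 0 b :=
    ContinuousOn.intervalIntegrable (by rw [uIcc_of_le hb]; fun_prop)
  rw [← intervalIntegral.integral_const_mul, ← intervalIntegral.integral_const_mul]
  exact ⟨integral_mono_on hb (hbound_int _) hint fun v hv => (hpointwise v hv).1,
    integral_mono_on hb hint (hbound_int _) fun v hv => (hpointwise v hv).2⟩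

theorem integral_mul_sub (b c : ℝ) : ∫ u in 0..b, u * (c - u) = c * b ^ 2 / 2 - b ^ 3 / 3 := by
  have h (u : ℝ) : u * (c - u) = c * u - u ^ 2 := by ring
  simp_rw [h]
  rw [intervalIntegral.integral_sub (by apply Continuous.intervalIntegrable; fun_prop)
      (by apply Continuous.intervalIntegrable; fun_prop),
    intervalIntegral.integral_const_mul, integral_id, integral_pow]
  ring

/-- For a density `f` on `[0,c]` with `0 < f̲ ≤ f ≤ f̄`, the expected revenue `g_f(x,l)`
is sandwiched between `(f̲c)²` and `(f̄c)²` times the expected revenue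
`c·(x/2 − x²/3 + l·x/6)` under the uniform density `1/c` on `[0,c]`. -/
theorem gRev_sandwich (c : ℝ) (hc : 0 < c) (f : ℝ → ℝ) (flo fhi : ℝ) (hflo : 0 < flo)
    (hf_lb : ∀ v ∈ Set.Icc (0 : ℝ) c, flo ≤ f v)
    (hf_ub : ∀ v ∈ Set.Icc (0 : ℝ) c, f v ≤ fhi)
    (hf_int : (∫ v in (0 : ℝ)..c, f v) = 1) :
    ∀ l ∈ Set.Icc (0 : ℝ) 1, ∀ x ∈ Set.Ioc (0 : ℝ) 1,
      (flo * c) ^ 2 * (c * (x / 2 - x ^ 2 / 3 + l * x / 6)) ≤ gRev c f x l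
      ∧ gRev c f x l ≤ (fhi * c) ^ 2 * (c * (x / 2 - x ^ 2 / 3 + l * x / 6)) := by
  rintro l ⟨hl0, -⟩ x ⟨hx0, hx1⟩
  have hf : IntervalIntegrable f volume 0 c :=
    intervalIntegrable_of_integral_ne_zero (by simp [hf_int])
  have hf_mem : ∀ v ∈ Icc 0 c, f v ∈ Icc flo fhi := fun v hv => ⟨hf_lb v hv, hf_ub v hv⟩
  have hcx : c * x ≤ c := mul_le_of_le_one_right hc.le hx1
  obtain ⟨hA_lo, hA_hi⟩ := integral_mul_tail_integral_mul_mem_Icc (s := fun v => v * x) hc.le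
    le_rfl hflo.le hf hf_mem (by fun_prop) fun v hv =>
      ⟨mul_nonneg hv.1 hx0.le, (mul_le_of_le_one_right hv.1 hx1).trans hv.2⟩
  obtain ⟨hB_lo, hB_hi⟩ := integral_mul_tail_integral_mul_mem_Icc (s := fun v => v / x)
    (by positivity) hcx hflo.le hf hf_mem (by fun_prop) fun v hv =>
      ⟨div_nonneg hv.1 hx0.le, (div_le_iff₀ hx0).2 hv.2⟩
  have hA : ∫ v in 0..c, v * x * (c - v * x) = c ^ 3 * (x / 2 - x ^ 2 / 3) := by
    rw [integral_comp_mul_right (fun u => u * (c - u)) hx0.ne', zero_mul, integral_mul_sub,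
      smul_eq_mul]
    field_simp
  have hB : ∫ v in 0..c * x, v / x * (c - v / x) = c ^ 3 * x / 6 := by
    rw [integral_comp_div (fun u => u * (c - u)) hx0.ne', zero_div, mul_div_assoc,
      div_self hx0.ne', mul_one, integral_mul_sub, smul_eq_mul]
    ring
  rw [hA] at hA_lo hA_hi
  rw [hB] at hB_lo hB_hi
  rw [gRev]
  constructor <;> linarith [mul_le_mul_of_nonneg_left hB_lo hl0,
    mul_le_mul_of_nonneg_left hB_hi hl0]
end

section
/- Let c > 0 and let f be a probability density on [0,c] satisfying 0 < f̲ ≤ f(v) ≤ f̄ for all v ∈ [0,c], and let l ∈ [0,1]. Then for every x ∈ (0,1]: (f̲/f̄)²·g_f(x,l) ≤ g_f((3+l)/4, l). That is, sending signals with the uniform-distribution optimal signal ratio (3+l)/4 achieves a (f̲/f̄)²-fraction of the optimal expected revenue over all signal ratios, for the unknown density f. -/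
/-! The revenue is monotone in the density: raising `f` pointwise on `[0, c]` raises both the
tail mass `∫ u in t..c, f u` and the weight `f v` in each integrand. For a constant density `h`
the revenue is `h² c³ ((3 + l) x / 6 - x² / 3)`, a concave quadratic in `x` maximised at
`x = (3 + l) / 4`. Sandwiching `f` between the constants `flo` and `fhi` therefore loses at
most the factor `(flo / fhi)²`. -/

open MeasureTheory Set

section TailIntegral

variable {f g : ℝ → ℝ} {c : ℝ}

lemma intervalIntegrable_mul_tailIntegral (hc : 0 ≤ c) (hf : IntervalIntegrable f volume 0 c)
    {ψ : ℝ → ℝ} (hψ : Continuous ψ) {b : ℝ} (hb : 0 ≤ b) (hbc : b ≤ c)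
    (hψmaps : MapsTo ψ (Icc 0 b) (Icc 0 c)) :
    IntervalIntegrable (fun v => ψ v * (∫ u in ψ v..c, f u) * f v) volume 0 b := by
  have htail : ContinuousOn (fun t => ∫ u in t..c, f u) (Icc 0 c) := by
    have := intervalIntegral.continuousOn_primitive_interval_left (by
      rw [uIcc_of_le hc]; exact (intervalIntegrable_iff_integrableOn_Icc_of_le hc).mp hf)
    rwa [uIcc_of_le hc] at this
  have hfb : IntervalIntegrable f volume 0 b :=
    hf.mono_set (by rw [uIcc_of_le hb, uIcc_of_le hc]; exact Icc_subset_Icc le_rfl hbc)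
  refine hfb.continuousOn_mul ?_
  rw [uIcc_of_le hb]
  exact hψ.continuousOn.mul (htail.comp hψ.continuousOn hψmaps)

lemma mul_tailIntegral_mul_le (hf : IntervalIntegrable f volume 0 c)
    (hg : IntervalIntegrable g volume 0 c) (hf0 : ∀ v ∈ Icc 0 c, 0 ≤ f v)
    (hfg : ∀ v ∈ Icc 0 c, f v ≤ g v) {t v : ℝ} (ht : t ∈ Icc 0 c) (hv : v ∈ Icc 0 c) :
    t * (∫ u in t..c, f u) * f v ≤ t * (∫ u in t..c, g u) * g v := by
  have hsub : uIcc t c ⊆ uIcc 0 c := by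
    rw [uIcc_of_le ht.2, uIcc_of_le (ht.1.trans ht.2)]; exact Icc_subset_Icc ht.1 le_rfl
  have hIcc : ∀ u ∈ Icc t c, u ∈ Icc 0 c := fun u hu => ⟨ht.1.trans hu.1, hu.2⟩
  have htail0 : 0 ≤ ∫ u in t..c, f u :=
    intervalIntegral.integral_nonneg ht.2 fun u hu => hf0 u (hIcc u hu)
  have htail : (∫ u in t..c, f u) ≤ ∫ u in t..c, g u :=
    intervalIntegral.integral_mono_on ht.2 (hf.mono_set hsub) (hg.mono_set hsub)
      fun u hu => hfg u (hIcc u hu)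
  exact mul_le_mul (mul_le_mul_of_nonneg_left htail ht.1) (hfg v hv) (hf0 v hv)
    (mul_nonneg ht.1 (htail0.trans htail))

lemma integral_mul_tailIntegral_mono (hc : 0 ≤ c) (hf : IntervalIntegrable f volume 0 c)
    (hg : IntervalIntegrable g volume 0 c) (hf0 : ∀ v ∈ Icc 0 c, 0 ≤ f v)
    (hfg : ∀ v ∈ Icc 0 c, f v ≤ g v) {ψ : ℝ → ℝ} (hψ : Continuous ψ) {b : ℝ} (hb : 0 ≤ b)
    (hbc : b ≤ c) (hψmaps : MapsTo ψ (Icc 0 b) (Icc 0 c)) :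
    (∫ v in (0 : ℝ)..b, ψ v * (∫ u in ψ v..c, f u) * f v) ≤
      ∫ v in (0 : ℝ)..b, ψ v * (∫ u in ψ v..c, g u) * g v :=
  intervalIntegral.integral_mono_on hb
    (intervalIntegrable_mul_tailIntegral hc hf hψ hb hbc hψmaps)
    (intervalIntegrable_mul_tailIntegral hc hg hψ hb hbc hψmaps)
    fun _ hv => mul_tailIntegral_mul_le hf hg hf0 hfg (hψmaps hv) ⟨hv.1, hv.2.trans hbc⟩

end TailIntegral

lemma gRev_mono {c : ℝ} (hc : 0 ≤ c) {f g : ℝ → ℝ} (hf : IntervalIntegrable f volume 0 c)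
    (hg : IntervalIntegrable g volume 0 c) (hf0 : ∀ v ∈ Icc 0 c, 0 ≤ f v)
    (hfg : ∀ v ∈ Icc 0 c, f v ≤ g v) {x l : ℝ} (hx0 : 0 < x) (hx1 : x ≤ 1) (hl : 0 ≤ l) :
    gRev c f x l ≤ gRev c g x l := by
  have hcx : c * x ≤ c := mul_le_of_le_one_right hc hx1
  have hmul : MapsTo (· * x) (Icc 0 c) (Icc 0 c) := fun v hv =>
    ⟨mul_nonneg hv.1 hx0.le, (mul_le_of_le_one_right hv.1 hx1).trans hv.2⟩
  have hdiv : MapsTo (· / x) (Icc 0 (c * x)) (Icc 0 c) := fun v hv =>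
    ⟨div_nonneg hv.1 hx0.le, (div_le_iff₀ hx0).mpr hv.2⟩
  unfold gRev
  gcongr ?_ + l * ?_
  · exact integral_mul_tailIntegral_mono hc hf hg hf0 hfg (continuous_mul_const x) hc le_rfl hmul
  · exact integral_mul_tailIntegral_mono hc hf hg hf0 hfg (continuous_id.div_const x)
      (mul_nonneg hc hx0.le) hcx hdiv

lemma integral_linear_add_quadratic (p q b : ℝ) :
    (∫ v in (0 : ℝ)..b, (p * v + q * v ^ 2)) = p * b ^ 2 / 2 + q * b ^ 3 / 3 := by
  rw [intervalIntegral.integral_add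
      ((continuous_const_mul p).intervalIntegrable _ _)
      ((continuous_pow 2).const_mul q |>.intervalIntegrable _ _),
    intervalIntegral.integral_const_mul, intervalIntegral.integral_const_mul,
    integral_id, integral_pow]
  ring

noncomputable def uniformRev (c x l : ℝ) : ℝ := c ^ 3 * ((3 + l) * x / 6 - x ^ 2 / 3)

lemma gRev_const (c h : ℝ) {x : ℝ} (hx : x ≠ 0) (l : ℝ) :
    gRev c (fun _ => h) x l = h ^ 2 * uniformRev c x l := by
  have hfirst : (fun v => v * x * ((c - v * x) * h) * h) =
      fun v => x * c * h ^ 2 * v + -(x ^ 2 * h ^ 2) * v ^ 2 := by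
    funext v; ring
  have hsecond : (fun v => v / x * ((c - v / x) * h) * h) =
      fun v => c * h ^ 2 / x * v + -(h ^ 2 / x ^ 2) * v ^ 2 := by
    funext v; field_simp; ring
  simp only [gRev, uniformRev, intervalIntegral.integral_const, smul_eq_mul]
  rw [hfirst, hsecond, integral_linear_add_quadratic, integral_linear_add_quadratic]
  field_simp
  ring

lemma uniformRev_le_optimal {c : ℝ} (hc : 0 ≤ c) (x l : ℝ) :
    uniformRev c x l ≤ uniformRev c ((3 + l) / 4) l := by
  unfold uniformRev
  exact mul_le_mul_of_nonneg_left (by nlinarith [sq_nonneg ((3 + l) / 4 - x)]) (by positivity)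

/-- For a density `f` on `[0,c]` with `0 < f̲ ≤ f ≤ f̄`, sending signals with the
uniform-distribution optimal signal ratio `(3+l)/4` achieves a `(f̲/f̄)²`-fraction of
the expected revenue of any signal ratio `x ∈ (0,1]`. -/
theorem uniform_ratio_prior_free_approx (c : ℝ) (hc : 0 < c) (f : ℝ → ℝ) (flo fhi : ℝ)
    (hflo : 0 < flo)
    (hf_lb : ∀ v ∈ Set.Icc (0 : ℝ) c, flo ≤ f v)
    (hf_ub : ∀ v ∈ Set.Icc (0 : ℝ) c, f v ≤ fhi)
    (hf_int : (∫ v in (0 : ℝ)..c, f v) = 1)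
    (l : ℝ) (hl : l ∈ Set.Icc (0 : ℝ) 1) :
    ∀ x ∈ Set.Ioc (0 : ℝ) 1,
      (flo / fhi) ^ 2 * gRev c f x l ≤ gRev c f ((3 + l) / 4) l := by
  rintro x ⟨hx0, hx1⟩
  have hc0 : (0 : ℝ) ∈ Icc 0 c := ⟨le_rfl, hc.le⟩
  have hfhi : fhi ≠ 0 := (hflo.trans_le ((hf_lb 0 hc0).trans (hf_ub 0 hc0))).ne'
  have hfI : IntervalIntegrable f volume 0 c :=
    intervalIntegral.intervalIntegrable_of_integral_ne_zero (hf_int ▸ one_ne_zero)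
  have hf0 : ∀ v ∈ Icc 0 c, 0 ≤ f v := fun v hv => hflo.le.trans (hf_lb v hv)
  have hopt0 : 0 < (3 + l) / 4 := by linarith [hl.1]
  have hopt1 : (3 + l) / 4 ≤ 1 := by linarith [hl.2]
  calc (flo / fhi) ^ 2 * gRev c f x l
      ≤ (flo / fhi) ^ 2 * gRev c (fun _ => fhi) x l := by
        gcongr
        exact gRev_mono hc.le hfI intervalIntegrable_const hf0 hf_ub hx0 hx1 hl.1
    _ = flo ^ 2 * uniformRev c x l := by
        rw [gRev_const c fhi hx0.ne']; field_simp
    _ ≤ flo ^ 2 * uniformRev c ((3 + l) / 4) l := by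
        gcongr; exact uniformRev_le_optimal hc.le x l
    _ = gRev c (fun _ => flo) ((3 + l) / 4) l := (gRev_const c flo hopt0.ne' l).symm
    _ ≤ gRev c f ((3 + l) / 4) l :=
        gRev_mono hc.le intervalIntegrable_const hfI (fun _ _ => hflo.le) hf_lb hopt0 hopt1 hl.1
end

section
/- Let c > 0 and let f be a continuous probability density on [0,c] with f(v) > 0 for all v ∈ [0,c]. Let F(v) = ∫₀ᵛ f(u) du and φ(t) = t − (1 − F(t))/f(t) (the virtual value function). Then for every l ∈ [0,1] and every x ∈ (0,1), the function x ↦ g_f(x,l) is differentiable at x with derivative equal to ∫₀ᶜ v·f(v)·f(v·x)·(l·φ(v) − φ(v·x)) dv. -/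
open MeasureTheory Set

/-- The virtual value function `φ(t) = t − (1 − F(t))/f(t)` where `F(t) = ∫₀ᵗ f`. -/
noncomputable def virtualValue (f : ℝ → ℝ) (t : ℝ) : ℝ :=
  t - (1 - ∫ u in (0 : ℝ)..t, f u) / f t

open intervalIntegral

theorem hasDerivAt_integral_mul_comp_mul {h K K' : ℝ → ℝ} (hh : Continuous h)
    (hK : ∀ t, HasDerivAt K (K' t) t) (hK' : Continuous K') (a b x : ℝ) :
    HasDerivAt (fun y => ∫ v in a..b, h v * K (v * y))
      (∫ v in a..b, h v * (v * K' (v * x))) x := by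
  have hKc : Continuous K := continuous_iff_continuousAt.2 fun t => (hK t).continuousAt
  obtain ⟨C, hC⟩ :=
    (isCompact_uIcc.prod (isCompact_closedBall x 1)).exists_bound_of_continuousOn
      (f := fun p : ℝ × ℝ => h p.1 * (p.1 * K' (p.1 * p.2)))
      (by fun_prop : Continuous _).continuousOn
  refine (hasDerivAt_integral_of_dominated_loc_of_deriv_le (bound := fun _ => C)
    (F' := fun y v => h v * (v * K' (v * y))) (Metric.closedBall_mem_nhds x one_pos)
    (.of_forall fun y => (by fun_prop : Continuous _).aestronglyMeasurable)
    ((by fun_prop : Continuous _).intervalIntegrable a b)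
    (by fun_prop : Continuous _).aestronglyMeasurable
    (ae_of_all _ fun v hv y hy => hC (v, y) ⟨uIoc_subset_uIcc hv, hy⟩)
    intervalIntegrable_const (ae_of_all _ fun v _ y _ => ?_)).2
  simpa [mul_comm] using ((hK (v * y)).comp y (hasDerivAt_const_mul v)).const_mul (h v)

theorem mul_mem_Icc_zero_of_mem_Icc {c v x : ℝ} (hv : v ∈ Icc 0 c) (hx : x ∈ Icc 0 1) :
    v * x ∈ Icc 0 c :=
  ⟨mul_nonneg hv.1 hx.1, (mul_le_of_le_one_right hv.1 hx.2).trans hv.2⟩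

noncomputable def postedPriceRevenue (f : ℝ → ℝ) (c s : ℝ) : ℝ :=
  s * ∫ u in s..c, f u

section ContinuousDensity

variable {f : ℝ → ℝ} {c : ℝ}

theorem hasDerivAt_integral_left_of_continuous (hf : Continuous f) (s : ℝ) :
    HasDerivAt (fun t => ∫ u in t..c, f u) (-f s) s :=
  integral_hasDerivAt_left (hf.intervalIntegrable s c) (hf.stronglyMeasurableAtFilter _ _)
    hf.continuousAt

theorem hasDerivAt_postedPriceRevenue (hf : Continuous f) (s : ℝ) :
    HasDerivAt (postedPriceRevenue f c) ((∫ u in s..c, f u) - s * f s) s :=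
  ((hasDerivAt_id' s).mul (hasDerivAt_integral_left_of_continuous hf s)).congr_deriv (by ring)

theorem continuous_postedPriceRevenue_deriv (hf : Continuous f) :
    Continuous fun s => (∫ u in s..c, f u) - s * f s :=
  (continuous_iff_continuousAt.2 fun s =>
    (hasDerivAt_integral_left_of_continuous hf s).continuousAt).sub (by fun_prop)

theorem postedPriceRevenue_deriv_eq_neg_mul_virtualValue (hf : Continuous f)
    (hint : ∫ u in 0..c, f u = 1) {s : ℝ} (hs : f s ≠ 0) :
    (∫ u in s..c, f u) - s * f s = -(f s * virtualValue f s) := by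
  have hsplit := integral_add_adjacent_intervals (hf.intervalIntegrable (μ := volume) 0 s)
    (hf.intervalIntegrable s c)
  rw [virtualValue, mul_sub, mul_div_cancel₀ _ hs]
  linarith

theorem gRev_eq_integral_postedPriceRevenue (x l : ℝ) :
    gRev c f x l = (∫ v in 0..c, f v * postedPriceRevenue f c (v * x))
      + l * ∫ v in 0..c * x, postedPriceRevenue f c (v / x) * f v := by
  rw [gRev]
  congr 1
  exact integral_congr fun v _ => by rw [postedPriceRevenue]; ring

theorem integral_postedPriceRevenue_div_mul (hf : Continuous f) {x : ℝ} (hx : x ≠ 0) :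
    ∫ v in 0..c * x, postedPriceRevenue f c (v / x) * f v
      = -∫ s in 0..c, ((∫ u in s..c, f u) - s * f s) * ∫ u in 0..s * x, f u := by
  have hF : ∀ s, HasDerivAt (fun s => ∫ u in 0..s * x, f u) (f (s * x) * x) s := fun s =>
    (integral_hasDerivAt_right (hf.intervalIntegrable _ _) (hf.stronglyMeasurableAtFilter _ _)
      hf.continuousAt).comp s (hasDerivAt_mul_const x)
  calc ∫ v in 0..c * x, postedPriceRevenue f c (v / x) * f v
      = ∫ s in 0..c, postedPriceRevenue f c s * (f (s * x) * x) := by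
        conv_lhs => rw [← zero_mul x, ← smul_integral_comp_mul_right]
        rw [smul_eq_mul, ← intervalIntegral.integral_const_mul]
        refine integral_congr fun s _ => ?_
        rw [mul_div_cancel_right₀ _ hx]
        ring
    _ = postedPriceRevenue f c c * (∫ u in 0..c * x, f u)
          - postedPriceRevenue f c 0 * (∫ u in 0..0 * x, f u)
          - ∫ s in 0..c, ((∫ u in s..c, f u) - s * f s) * ∫ u in 0..s * x, f u :=
        integral_mul_deriv_eq_deriv_mul (fun s _ => hasDerivAt_postedPriceRevenue hf s)
          (fun s _ => hF s) ((continuous_postedPriceRevenue_deriv hf).intervalIntegrable _ _)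
          ((by fun_prop : Continuous fun s => f (s * x) * x).intervalIntegrable _ _)
    _ = _ := by simp [postedPriceRevenue]

theorem hasDerivAt_gRev_of_continuous (hf : Continuous f) {x : ℝ} (hx : x ≠ 0) (l : ℝ) :
    HasDerivAt (fun y => gRev c f y l)
      ((∫ v in 0..c, f v * (v * ((∫ u in v * x..c, f u) - v * x * f (v * x))))
        - l * ∫ s in 0..c, ((∫ u in s..c, f u) - s * f s) * (s * f (s * x))) x := by
  have hfirst := hasDerivAt_integral_mul_comp_mul hf (hasDerivAt_postedPriceRevenue (c := c) hf)
    (continuous_postedPriceRevenue_deriv hf) 0 c x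
  have hsecond := hasDerivAt_integral_mul_comp_mul (continuous_postedPriceRevenue_deriv (c := c) hf)
    (fun t => integral_hasDerivAt_right (hf.intervalIntegrable 0 t)
      (hf.stronglyMeasurableAtFilter _ _) hf.continuousAt) hf 0 c x
  refine (hfirst.sub (hsecond.const_mul l)).congr_of_eventuallyEq ?_
  filter_upwards [eventually_ne_nhds hx] with y hy
  rw [gRev_eq_integral_postedPriceRevenue, integral_postedPriceRevenue_div_mul hf hy, mul_neg,
    ← sub_eq_add_neg]
  rfl

theorem hasDerivAt_gRev_virtualValue_of_continuous (hf : Continuous f) (hc : 0 ≤ c)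
    (hpos : ∀ v ∈ Icc 0 c, 0 < f v) (hint : ∫ u in 0..c, f u = 1) (l : ℝ) {x : ℝ}
    (hx : x ∈ Ioc 0 1) :
    HasDerivAt (fun y => gRev c f y l)
      (∫ v in 0..c, v * f v * f (v * x) * (l * virtualValue f v - virtualValue f (v * x))) x := by
  have hP' := continuous_postedPriceRevenue_deriv (c := c) hf
  convert hasDerivAt_gRev_of_continuous hf hx.1.ne' l using 1
  rw [← intervalIntegral.integral_const_mul, ← intervalIntegral.integral_sub]
  · refine integral_congr fun v hv => ?_
    rw [uIcc_of_le hc] at hv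
    have hvx := mul_mem_Icc_zero_of_mem_Icc hv (Ioc_subset_Icc_self hx)
    simp only [postedPriceRevenue_deriv_eq_neg_mul_virtualValue hf hint (hpos v hv).ne',
      postedPriceRevenue_deriv_eq_neg_mul_virtualValue hf hint (hpos _ hvx).ne']
    ring
  · exact (hf.mul (continuous_id.mul (hP'.comp (continuous_mul_const x)))).intervalIntegrable _ _
  · exact (continuous_const.mul (hP'.mul (continuous_id.mul (hf.comp (continuous_mul_const x)))))
      |>.intervalIntegrable _ _

end ContinuousDensity

section Congr

variable {f g : ℝ → ℝ} {c : ℝ}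

theorem integral_congr_of_eqOn_Icc (hfg : EqOn f g (Icc 0 c)) {a b : ℝ} (ha : 0 ≤ a)
    (hab : a ≤ b) (hb : b ≤ c) : ∫ u in a..b, f u = ∫ u in a..b, g u := by
  refine integral_congr (hfg.mono ?_)
  rw [uIcc_of_le hab]
  exact Icc_subset_Icc ha hb

theorem virtualValue_congr (hfg : EqOn f g (Icc 0 c)) {t : ℝ} (ht : t ∈ Icc 0 c) :
    virtualValue f t = virtualValue g t := by
  rw [virtualValue, virtualValue, integral_congr_of_eqOn_Icc hfg le_rfl ht.1 ht.2, hfg ht]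

theorem gRev_congr (hc : 0 ≤ c) (hfg : EqOn f g (Icc 0 c)) {y : ℝ} (hy : y ∈ Ioc 0 1)
    (l : ℝ) : gRev c f y l = gRev c g y l := by
  have hcy : c * y ≤ c := mul_le_of_le_one_right hc hy.2
  rw [gRev, gRev]
  congr 1
  · refine integral_congr fun v hv => ?_
    rw [uIcc_of_le hc] at hv
    have hvy := mul_mem_Icc_zero_of_mem_Icc hv (Ioc_subset_Icc_self hy)
    rw [integral_congr_of_eqOn_Icc hfg hvy.1 hvy.2 le_rfl, hfg hv]
  · refine congrArg (l * ·) (integral_congr fun v hv => ?_)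
    rw [uIcc_of_le (mul_nonneg hc hy.1.le)] at hv
    have hvy : v / y ∈ Icc 0 c :=
      ⟨div_nonneg hv.1 hy.1.le, (div_le_iff₀ hy.1).2 (by linarith [hv.2, mul_comm c y])⟩
    rw [integral_congr_of_eqOn_Icc hfg hvy.1 hvy.2 le_rfl, hfg ⟨hv.1, hv.2.trans hcy⟩]

theorem integral_virtualValue_congr (hc : 0 ≤ c) (hfg : EqOn f g (Icc 0 c)) {x : ℝ}
    (hx : x ∈ Icc 0 1) (l : ℝ) :
    ∫ v in 0..c, v * f v * f (v * x) * (l * virtualValue f v - virtualValue f (v * x))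
      = ∫ v in 0..c, v * g v * g (v * x) * (l * virtualValue g v - virtualValue g (v * x)) := by
  refine integral_congr fun v hv => ?_
  rw [uIcc_of_le hc] at hv
  have hvx := mul_mem_Icc_zero_of_mem_Icc hv hx
  simp only [hfg hv, hfg hvx, virtualValue_congr hfg hv, virtualValue_congr hfg hvx]

end Congr

/-- For a continuous strictly positive density `f` on `[0,c]`, the expected revenue
`g_f(·,l)` is differentiable at every `x ∈ (0,1)`, with derivative
`∫₀ᶜ v·f(v)·f(vx)·(l·φ(v) − φ(vx)) dv`. -/
theorem gRev_hasDerivAt (c : ℝ) (hc : 0 < c) (f : ℝ → ℝ)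
    (hf_cont : ContinuousOn f (Set.Icc 0 c))
    (hf_pos : ∀ v ∈ Set.Icc (0 : ℝ) c, 0 < f v)
    (hf_int : (∫ v in (0 : ℝ)..c, f v) = 1) :
    ∀ l ∈ Set.Icc (0 : ℝ) 1, ∀ x ∈ Set.Ioo (0 : ℝ) 1,
      HasDerivAt (fun y => gRev c f y l)
        (∫ v in (0 : ℝ)..c,
          v * f v * f (v * x) * (l * virtualValue f v - virtualValue f (v * x))) x := by
  intro l _ x hx
  set g := IccExtend hc.le ((Icc 0 c).domRestrict f)
  have hg : Continuous g := hf_cont.domRestrict.Icc_extend'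
  have hfg : EqOn f g (Icc 0 c) := fun t ht =>
    (IccExtend_of_mem hc.le ((Icc 0 c).domRestrict f) ht).symm
  rw [integral_virtualValue_congr hc.le hfg (Ioo_subset_Icc_self hx) l]
  refine (hasDerivAt_gRev_virtualValue_of_continuous hg hc.le (fun v hv => hfg hv ▸ hf_pos v hv)
    (integral_congr_of_eqOn_Icc hfg le_rfl hc.le le_rfl ▸ hf_int) l (Ioo_subset_Ioc_self hx))
    |>.congr_of_eventuallyEq ?_
  filter_upwards [Ioo_mem_nhds hx.1 hx.2] with y hy
    using gRev_congr hc.le hfg (Ioo_subset_Ioc_self hy) l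
end

section
/- Let c > 0 and let f be a continuous probability density on [0,c] with f(v) > 0 for all v ∈ [0,c] and with monotone hazard rate. Suppose x : [0,1] → [0,1] is continuous and convex, that for every l ∈ [0,1] the value x(l) maximizes g_f(·,l) over [0,1] (with g_f(0,l) = 0), and that x(l) < 1 for every l < 1. Then x is strictly increasing on [0,1]. -/
open MeasureTheory Set

open intervalIntegral

/-!
Write `g_f(y, l) = A(y) + l B(y)`. Comparing the optimality of `x a` and `x b` for `l = a < b`
gives `B (x a) ≤ B (x b)`. At an interior optimum the first-order condition `A' + l B' = 0` holds,
while the MHR property makes `A' + B' > 0` on `(0, 1)`; hence `(1 - l) B' > 0`, so `B' > 0` at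
every interior optimum with `l < 1`. If `x b < x a`, every point of `(x b, x a)` is such an
optimum by the intermediate value theorem, so `B (x b) < B (x a)`, a contradiction; if
`x a = x b`, the two first-order conditions at the same point force `B' = 0`. To differentiate
in `y`, `f` is extended continuously to `ℝ` and the `l`-term is rewritten by the substitution
`v = t y` and an integration by parts.
-/

namespace ClickAuction

section ComparativeStatics

theorem le_of_isMaxOn_add_mul {α : Type*} {A B : α → ℝ} {s : Set α} {a b : ℝ} {y₁ y₂ : α}
    (hab : a < b) (hy₁ : y₁ ∈ s) (hy₂ : y₂ ∈ s)
    (h₁ : IsMaxOn (fun y => A y + a * B y) s y₁)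
    (h₂ : IsMaxOn (fun y => A y + b * B y) s y₂) :
    B y₁ ≤ B y₂ := by
  have e₁ : A y₂ + a * B y₂ ≤ A y₁ + a * B y₁ := h₁ hy₂
  have e₂ : A y₁ + b * B y₁ ≤ A y₂ + b * B y₂ := h₂ hy₁
  nlinarith

variable {A B A' B' x : ℝ → ℝ}

theorem strictMonoOn_of_isMaxOn_add_mul
    (hA : ∀ y ∈ Ioo (0 : ℝ) 1, HasDerivAt A (A' y) y)
    (hB : ∀ y ∈ Ioo (0 : ℝ) 1, HasDerivAt B (B' y) y)
    (hAB : ∀ y ∈ Ioo (0 : ℝ) 1, 0 < A' y + B' y)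
    (hx_mem : MapsTo x (Icc 0 1) (Ioc 0 1))
    (hx_cont : ContinuousOn x (Icc 0 1))
    (hx_max : ∀ l ∈ Icc (0 : ℝ) 1, IsMaxOn (fun y => A y + l * B y) (Ioc 0 1) (x l))
    (hx_lt_one : ∀ l ∈ Icc (0 : ℝ) 1, l < 1 → x l < 1) :
    StrictMonoOn x (Icc 0 1) := by
  have hcrit : ∀ l ∈ Icc (0 : ℝ) 1, x l < 1 → A' (x l) + l * B' (x l) = 0 := fun l hl hl1 =>
    ((hx_max l hl).isLocalMax (Ioc_mem_nhds (hx_mem hl).1 hl1)).hasDerivAt_eq_zero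
      ((hA _ ⟨(hx_mem hl).1, hl1⟩).add ((hB _ ⟨(hx_mem hl).1, hl1⟩).const_mul l))
  have hB'_pos : ∀ l ∈ Icc (0 : ℝ) 1, l < 1 → 0 < B' (x l) := fun l hl hl1 => by
    have := hcrit l hl (hx_lt_one l hl hl1)
    have := hAB (x l) ⟨(hx_mem hl).1, hx_lt_one l hl hl1⟩
    nlinarith
  intro a ha b hb hab
  have ha1 : a < 1 := hab.trans_le hb.2
  by_contra! hba
  rcases hba.lt_or_eq with hlt | heq
  · have hIcc : Icc (x b) (x a) ⊆ Ioo 0 1 :=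
      Icc_subset_Ioo (hx_mem hb).1 (hx_lt_one a ha ha1)
    have hB_mono : StrictMonoOn B (Icc (x b) (x a)) := by
      refine strictMonoOn_of_hasDerivWithinAt_pos (f' := B') (convex_Icc _ _)
        (fun ξ hξ => (hB ξ (hIcc hξ)).continuousAt.continuousWithinAt)
        (fun ξ hξ => (hB ξ (hIcc (interior_subset hξ))).hasDerivWithinAt) fun ξ hξ => ?_
      rw [interior_Icc] at hξ
      obtain ⟨l, hl, rfl⟩ := intermediate_value_Icc' hab.le
        (hx_cont.mono (Icc_subset_Icc ha.1 hb.2)) ⟨hξ.1.le, hξ.2.le⟩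
      have hlb : l < b := hl.2.lt_of_ne (by rintro rfl; exact hξ.1.false)
      exact hB'_pos l ⟨ha.1.trans hl.1, hl.2.trans hb.2⟩ (hlb.trans_le hb.2)
    exact (hB_mono ⟨le_rfl, hlt.le⟩ ⟨hlt.le, le_rfl⟩ hlt).not_ge
      (le_of_isMaxOn_add_mul hab (hx_mem ha) (hx_mem hb) (hx_max a ha) (hx_max b hb))
  · have hxa1 := hx_lt_one a ha ha1
    have hfa := hcrit a ha hxa1
    have hfb := hcrit b hb (heq ▸ hxa1)
    rw [heq] at hfb
    have := hB'_pos a ha ha1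
    nlinarith

end ComparativeStatics

section Revenue

theorem hasDerivAt_intervalIntegral_of_continuous {F F' : ℝ → ℝ → ℝ} {a b : ℝ}
    (hF : Continuous (Function.uncurry F)) (hF' : Continuous (Function.uncurry F'))
    (hd : ∀ y t, HasDerivAt (fun y => F y t) (F' y t) y) (y₀ : ℝ) :
    HasDerivAt (fun y => ∫ t in a..b, F y t) (∫ t in a..b, F' y₀ t) y₀ := by
  obtain ⟨M, hM⟩ := ((isCompact_closedBall y₀ 1).prod isCompact_uIcc).exists_bound_of_continuousOn
    hF'.continuousOn
  refine (hasDerivAt_integral_of_dominated_loc_of_deriv_le (bound := fun _ => M)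
    (Metric.ball_mem_nhds y₀ one_pos) ?_ ?_ ?_ ?_ intervalIntegrable_const ?_).2
  · exact .of_forall fun y => (hF.comp (Continuous.prodMk_right y)).aestronglyMeasurable
  · exact (hF.comp (Continuous.prodMk_right y₀)).intervalIntegrable a b
  · exact (hF'.comp (Continuous.prodMk_right y₀)).aestronglyMeasurable
  · exact .of_forall fun t ht y hy =>
      hM (y, t) ⟨Metric.ball_subset_closedBall hy, uIoc_subset_uIcc ht⟩
  · exact .of_forall fun t _ y _ => hd y t

variable {c : ℝ} {g : ℝ → ℝ}

noncomputable def survival (c : ℝ) (g : ℝ → ℝ) (t : ℝ) : ℝ := ∫ u in t..c, g u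

theorem hasDerivAt_survival (hg : Continuous g) (t : ℝ) :
    HasDerivAt (survival c g) (-g t) t := by
  have h : survival c g = fun s => -∫ u in c..s, g u := funext fun s => integral_symm c s
  exact h ▸ (hg.integral_hasStrictDerivAt c t).hasDerivAt.neg

theorem continuous_survival (hg : Continuous g) : Continuous (survival c g) :=
  continuous_iff_continuousAt.2 fun t => (hasDerivAt_survival hg t).continuousAt

@[simp] theorem survival_self : survival c g c = 0 := integral_same

theorem survival_pos (hg : Continuous g) (hg_pos : ∀ u, 0 < g u) {t : ℝ} (ht : t < c) :
    0 < survival c g t :=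
  intervalIntegral_pos_of_pos (hg.intervalIntegrable t c) hg_pos ht

noncomputable def firstSlotRevenue (c : ℝ) (g : ℝ → ℝ) (y : ℝ) : ℝ :=
  ∫ v in (0 : ℝ)..c, v * y * survival c g (v * y) * g v

/-- The `l`-coefficient of `gRev` after the substitution `v = t y` and an integration by parts:
its limits no longer depend on `y`, so it can be differentiated under the integral sign. -/
noncomputable def secondSlotRevenue (c : ℝ) (g : ℝ → ℝ) (y : ℝ) : ℝ :=
  ∫ t in (0 : ℝ)..c, survival c g (t * y) * (survival c g t - t * g t)

noncomputable def firstSlotRevenueDeriv (c : ℝ) (g : ℝ → ℝ) (y : ℝ) : ℝ :=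
  ∫ t in (0 : ℝ)..c, (t * survival c g (t * y) - t ^ 2 * y * g (t * y)) * g t

/-- The `l`-coefficient of `gRev` after the substitution `v = t y` and an integration by parts:
its limits no longer depend on `y`, so it can be differentiated under the integral sign. -/
noncomputable def secondSlotRevenueDeriv (c : ℝ) (g : ℝ → ℝ) (y : ℝ) : ℝ :=
  ∫ t in (0 : ℝ)..c, t * g (t * y) * (t * g t - survival c g t)

theorem hasDerivAt_survival_const_mul (hg : Continuous g) (t y : ℝ) :
    HasDerivAt (fun y => survival c g (t * y)) (-(t * g (t * y))) y := by
  have := (hasDerivAt_survival (c := c) hg (t * y)).comp y ((hasDerivAt_id y).const_mul t)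
  exact this.congr_deriv (by simp only [mul_one, neg_mul]; ring)

theorem hasDerivAt_firstSlotRevenue (hg : Continuous g) (y : ℝ) :
    HasDerivAt (firstSlotRevenue c g) (firstSlotRevenueDeriv c g y) y := by
  have hG := continuous_survival (c := c) hg
  refine hasDerivAt_intervalIntegral_of_continuous
    (F := fun y t => t * y * survival c g (t * y) * g t)
    (F' := fun y t => (t * survival c g (t * y) - t ^ 2 * y * g (t * y)) * g t)
    (by fun_prop) (by fun_prop) (fun y t => ?_) y
  exact ((((hasDerivAt_id y).const_mul t).mul
    (hasDerivAt_survival_const_mul (c := c) hg t y)).mul_const (g t)).congr_deriv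
      (by simp only [id, mul_one]; ring)

theorem hasDerivAt_secondSlotRevenue (hg : Continuous g) (y : ℝ) :
    HasDerivAt (secondSlotRevenue c g) (secondSlotRevenueDeriv c g y) y := by
  have hG := continuous_survival (c := c) hg
  refine hasDerivAt_intervalIntegral_of_continuous
    (F := fun y t => survival c g (t * y) * (survival c g t - t * g t))
    (F' := fun y t => t * g (t * y) * (t * g t - survival c g t))
    (by fun_prop) (by fun_prop) (fun y t => ?_) y
  exact ((hasDerivAt_survival_const_mul hg t y).mul_const _).congr_deriv (by ring)

theorem integral_div_mul_survival_eq (hg : Continuous g) {y : ℝ} (hy : 0 < y) :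
    ∫ v in (0 : ℝ)..c * y, v / y * survival c g (v / y) * g v = secondSlotRevenue c g y := by
  have hG := continuous_survival (c := c) hg
  have hsubst : ∫ v in (0 : ℝ)..c * y, v / y * survival c g (v / y) * g v
      = y * ∫ t in (0 : ℝ)..c, t * survival c g t * g (t * y) := by
    have := integral_comp_mul_right (a := 0) (b := c)
      (fun v => v / y * survival c g (v / y) * g v) hy.ne'
    simp only [mul_div_cancel_right₀ _ hy.ne', zero_mul, smul_eq_mul] at this
    rw [this, ← mul_assoc, mul_inv_cancel₀ hy.ne', one_mul]
  -- `t ↦ t G(t) G(t y)` with `G = survival c g` vanishes at `0` and at `c`.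
  have hparts : ∫ t in (0 : ℝ)..c, (survival c g (t * y) * (survival c g t - t * g t)
      - y * (t * survival c g t * g (t * y))) = 0 := by
    rw [integral_eq_sub_of_hasDerivAt (f := fun t => t * survival c g t * survival c g (t * y))
      (fun t _ => ?_) (by apply Continuous.intervalIntegrable; fun_prop)]
    · simp only [survival_self, mul_zero, zero_mul, sub_self]
    · have h := ((hasDerivAt_id t).mul (hasDerivAt_survival (c := c) hg t)).mul
        ((hasDerivAt_survival (c := c) hg (t * y)).comp t ((hasDerivAt_id t).mul_const y))
      exact h.congr_deriv (by simp only [Pi.mul_apply, Function.comp_apply, id, one_mul]; ring)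
  rw [intervalIntegral.integral_sub (by apply Continuous.intervalIntegrable; fun_prop)
    (by apply Continuous.intervalIntegrable; fun_prop), intervalIntegral.integral_const_mul,
    sub_eq_zero] at hparts
  rw [hsubst, ← hparts, secondSlotRevenue]

theorem gRev_eq (hg : Continuous g) {y : ℝ} (hy : 0 < y) (l : ℝ) :
    gRev c g y l = firstSlotRevenue c g y + l * secondSlotRevenue c g y := by
  rw [gRev, ← integral_div_mul_survival_eq hg hy]
  rfl

theorem gRev_one_pos (hc : 0 < c) (hg : Continuous g) (hg_pos : ∀ u, 0 < g u) {l : ℝ}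
    (hl : 0 ≤ l) : 0 < gRev c g 1 l := by
  have hG := continuous_survival (c := c) hg
  have hint : 0 < ∫ v in (0 : ℝ)..c, v * survival c g v * g v :=
    intervalIntegral_pos_of_pos_on (by apply Continuous.intervalIntegrable; fun_prop)
      (fun v hv => mul_pos (mul_pos hv.1 (survival_pos hg hg_pos hv.2)) (hg_pos v)) hc
  simp only [gRev, mul_one, div_one]
  have : 0 ≤ l * ∫ v in (0 : ℝ)..c, v * survival c g v * g v := by positivity
  exact add_pos_of_pos_of_nonneg hint this

theorem firstSlotRevenueDeriv_add_secondSlotRevenueDeriv_pos (hc : 0 < c) (hg : Continuous g)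
    (hg_pos : ∀ u, 0 < g u)
    (hcross : ∀ s t, 0 ≤ s → s ≤ t → t ≤ c → g s * survival c g t ≤ g t * survival c g s)
    {y : ℝ} (hy : y ∈ Ico (0 : ℝ) 1) :
    0 < firstSlotRevenueDeriv c g y + secondSlotRevenueDeriv c g y := by
  have hG := continuous_survival (c := c) hg
  rw [firstSlotRevenueDeriv, secondSlotRevenueDeriv, ← intervalIntegral.integral_add
    (by apply Continuous.intervalIntegrable; fun_prop)
    (by apply Continuous.intervalIntegrable; fun_prop)]
  refine intervalIntegral_pos_of_pos_on (by apply Continuous.intervalIntegrable; fun_prop)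
    (fun t ht => ?_) hc
  have hmhr := hcross (t * y) t (mul_nonneg ht.1.le hy.1)
    (mul_le_of_le_one_right ht.1.le hy.2.le) ht.2.le
  have hgg : 0 < (1 - y) * t ^ 2 * g t * g (t * y) :=
    mul_pos (mul_pos (mul_pos (sub_pos.2 hy.2) (pow_pos ht.1 2)) (hg_pos t)) (hg_pos _)
  calc 0 < t * (g t * survival c g (t * y) - g (t * y) * survival c g t)
        + (1 - y) * t ^ 2 * g t * g (t * y) :=
        add_pos_of_nonneg_of_pos (mul_nonneg ht.1.le (sub_nonneg.2 hmhr)) hgg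
    _ = _ := by ring

theorem gRev_zero (c : ℝ) (f : ℝ → ℝ) (l : ℝ) : gRev c f 0 l = 0 := by
  simp [gRev]

end Revenue

section Density

variable {c : ℝ} {f g : ℝ → ℝ}

theorem exists_continuous_pos_extension {a b : ℝ} (hab : a ≤ b) (hf : ContinuousOn f (Icc a b))
    (hf_pos : ∀ v ∈ Icc a b, 0 < f v) :
    ∃ g : ℝ → ℝ, Continuous g ∧ (∀ t, 0 < g t) ∧ EqOn f g (Icc a b) :=
  ⟨IccExtend hab ((Icc a b).domRestrict f), continuous_IccExtend_iff.2 hf.domRestrict,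
    fun t => hf_pos _ (projIcc a b hab t).2,
    fun _ hv => (IccExtend_of_mem hab ((Icc a b).domRestrict f) hv).symm⟩

theorem survival_congr (hc : 0 ≤ c) (hfg : EqOn f g (Icc 0 c)) {t : ℝ} (ht : t ∈ Icc 0 c) :
    survival c f t = survival c g t :=
  integral_congr fun _ hu => hfg (uIcc_subset_Icc ht ⟨hc, le_rfl⟩ hu)

theorem gRev_congr (hc : 0 ≤ c) (hfg : EqOn f g (Icc 0 c)) {y : ℝ} (hy : y ∈ Icc (0 : ℝ) 1)
    (l : ℝ) : gRev c f y l = gRev c g y l := by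
  have hcy : c * y ≤ c := mul_le_of_le_one_right hc hy.2
  unfold gRev
  congr 1
  · refine integral_congr fun v hv => ?_
    rw [uIcc_of_le hc] at hv
    have hvy : v * y ∈ Icc 0 c :=
      ⟨mul_nonneg hv.1 hy.1, (mul_le_of_le_one_right hv.1 hy.2).trans hv.2⟩
    change v * y * survival c f (v * y) * f v = v * y * survival c g (v * y) * g v
    rw [survival_congr hc hfg hvy, hfg hv]
  · refine congrArg _ (integral_congr fun v hv => ?_)
    rw [uIcc_of_le (mul_nonneg hc hy.1)] at hv
    have hvy : v / y ∈ Icc 0 c := ⟨div_nonneg hv.1 hy.1, div_le_of_le_mul₀ hy.1 hc hv.2⟩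
    change v / y * survival c f (v / y) * f v = v / y * survival c g (v / y) * g v
    rw [survival_congr hc hfg hvy, hfg ⟨hv.1, hv.2.trans hcy⟩]

theorem mul_survival_le_of_hazardRate_mono (hc : 0 < c) (hf : ContinuousOn f (Icc 0 c))
    (hf_pos : ∀ v ∈ Icc (0 : ℝ) c, 0 < f v) (hf_int : ∫ v in (0 : ℝ)..c, f v = 1)
    (hMHR : ∀ v₁ ∈ Icc (0 : ℝ) c, ∀ v₂ ∈ Icc (0 : ℝ) c, v₁ ≤ v₂ →
      (∫ u in (0 : ℝ)..v₁, f u) < 1 → (∫ u in (0 : ℝ)..v₂, f u) < 1 →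
      f v₁ / (1 - ∫ u in (0 : ℝ)..v₁, f u) ≤ f v₂ / (1 - ∫ u in (0 : ℝ)..v₂, f u))
    {s t : ℝ} (hs : 0 ≤ s) (hst : s ≤ t) (htc : t ≤ c) :
    f s * survival c f t ≤ f t * survival c f s := by
  have hs' : s ∈ Icc 0 c := ⟨hs, hst.trans htc⟩
  have ht' : t ∈ Icc 0 c := ⟨hs.trans hst, htc⟩
  have hint : ∀ v ∈ Icc (0 : ℝ) c, ∀ w ∈ Icc (0 : ℝ) c, IntervalIntegrable f volume v w :=
    fun v hv w hw => (hf.mono (uIcc_subset_Icc hv hw)).intervalIntegrable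
  have hmem0 : (0 : ℝ) ∈ Icc 0 c := ⟨le_rfl, hc.le⟩
  have hmemc : c ∈ Icc 0 c := ⟨hc.le, le_rfl⟩
  have hF : ∀ v ∈ Icc (0 : ℝ) c, 1 - ∫ u in (0 : ℝ)..v, f u = survival c f v := fun v hv => by
    rw [← hf_int, ← integral_add_adjacent_intervals (hint 0 hmem0 v hv) (hint v hv c hmemc),
      add_sub_cancel_left, survival]
  have hG_pos : ∀ v ∈ Icc (0 : ℝ) c, v < c → 0 < survival c f v := fun v hv hvc =>
    intervalIntegral_pos_of_pos_on (hint v hv c hmemc)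
      (fun u hu => hf_pos u ⟨hv.1.trans hu.1.le, hu.2.le⟩) hvc
  rcases htc.eq_or_lt with rfl | htc
  · rw [survival_self, mul_zero]
    exact mul_nonneg (hf_pos t ht').le
      (integral_nonneg hst fun u hu => (hf_pos u ⟨hs.trans hu.1, hu.2⟩).le)
  · have hGs := hG_pos s hs' (hst.trans_lt htc)
    have hGt := hG_pos t ht' htc
    have h := hMHR s hs' t ht' hst (by linarith [hF s hs']) (by linarith [hF t ht'])
    rw [hF s hs', hF t ht'] at h
    exact (div_le_div_iff₀ hGs hGt).1 h

end Density

end ClickAuction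

open ClickAuction

theorem optimal_signal_ratio_strictMono_general (c : ℝ) (hc : 0 < c) (f : ℝ → ℝ)
    (hf_cont : ContinuousOn f (Set.Icc 0 c))
    (hf_pos : ∀ v ∈ Set.Icc (0 : ℝ) c, 0 < f v)
    (hf_int : (∫ v in (0 : ℝ)..c, f v) = 1)
    (hMHR : ∀ v₁ ∈ Set.Icc (0 : ℝ) c, ∀ v₂ ∈ Set.Icc (0 : ℝ) c, v₁ ≤ v₂ →
      (∫ u in (0 : ℝ)..v₁, f u) < 1 → (∫ u in (0 : ℝ)..v₂, f u) < 1 →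
      f v₁ / (1 - ∫ u in (0 : ℝ)..v₁, f u) ≤ f v₂ / (1 - ∫ u in (0 : ℝ)..v₂, f u))
    (x : ℝ → ℝ)
    (hx_mem : ∀ l ∈ Set.Icc (0 : ℝ) 1, x l ∈ Set.Icc (0 : ℝ) 1)
    (hx_cont : ContinuousOn x (Set.Icc 0 1))
    (hx_max : ∀ l ∈ Set.Icc (0 : ℝ) 1, ∀ y ∈ Set.Icc (0 : ℝ) 1,
      gRev c f y l ≤ gRev c f (x l) l)
    (hx_lt_one : ∀ l ∈ Set.Icc (0 : ℝ) 1, l < 1 → x l < 1) :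
    StrictMonoOn x (Set.Icc 0 1) := by
  obtain ⟨g, hg, hg_pos, hfg⟩ := exists_continuous_pos_extension hc.le hf_cont hf_pos
  have hcross : ∀ s t, 0 ≤ s → s ≤ t → t ≤ c → g s * survival c g t ≤ g t * survival c g s := by
    intro s t hs hst htc
    have hs' : s ∈ Icc 0 c := ⟨hs, hst.trans htc⟩
    have ht' : t ∈ Icc 0 c := ⟨hs.trans hst, htc⟩
    rw [← hfg hs', ← hfg ht', ← survival_congr hc.le hfg hs', ← survival_congr hc.le hfg ht']
    exact mul_survival_le_of_hazardRate_mono hc hf_cont hf_pos hf_int hMHR hs hst htc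
  have hrev : ∀ l, ∀ y ∈ Ioc (0 : ℝ) 1,
      gRev c f y l = firstSlotRevenue c g y + l * secondSlotRevenue c g y := fun l y hy =>
    (gRev_congr hc.le hfg (Ioc_subset_Icc_self hy) l).trans (gRev_eq hg hy.1 l)
  have hx_pos : ∀ l ∈ Icc (0 : ℝ) 1, 0 < x l := fun l hl => (hx_mem l hl).1.lt_of_ne' fun h0 => by
    have h1 := hx_max l hl 1 ⟨zero_le_one, le_rfl⟩
    rw [h0, gRev_zero, gRev_congr hc.le hfg ⟨zero_le_one, le_rfl⟩] at h1
    exact h1.not_gt (gRev_one_pos hc hg hg_pos hl.1)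
  exact strictMonoOn_of_isMaxOn_add_mul (fun y _ => hasDerivAt_firstSlotRevenue hg y)
    (fun y _ => hasDerivAt_secondSlotRevenue hg y)
    (fun y hy => firstSlotRevenueDeriv_add_secondSlotRevenueDeriv_pos hc hg hg_pos hcross
      (Ioo_subset_Ico_self hy))
    (fun l hl => ⟨hx_pos l hl, (hx_mem l hl).2⟩) hx_cont
    (fun l hl => isMaxOn_iff.2 fun y hy => by
      rw [← hrev l y hy, ← hrev l (x l) ⟨hx_pos l hl, (hx_mem l hl).2⟩]
      exact hx_max l hl y (Ioc_subset_Icc_self hy))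
    hx_lt_one

/-- If the optimal signal ratio function `x(·)` (selecting a maximizer of `g_f(·,l)` over
`[0,1]` for every `l`) is continuous and convex on `[0,1]`, takes values in `[0,1]`, and
satisfies `x(l) < 1` for `l < 1`, then it is strictly increasing on `[0,1]` —
provided `f` is a continuous, strictly positive MHR density on `[0,c]`. -/
theorem optimal_signal_ratio_strictMono (c : ℝ) (hc : 0 < c) (f : ℝ → ℝ)
    (hf_cont : ContinuousOn f (Set.Icc 0 c))
    (hf_pos : ∀ v ∈ Set.Icc (0 : ℝ) c, 0 < f v)
    (hf_int : (∫ v in (0 : ℝ)..c, f v) = 1)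
    (hMHR : ∀ v₁ ∈ Set.Icc (0 : ℝ) c, ∀ v₂ ∈ Set.Icc (0 : ℝ) c, v₁ ≤ v₂ →
      (∫ u in (0 : ℝ)..v₁, f u) < 1 → (∫ u in (0 : ℝ)..v₂, f u) < 1 →
      f v₁ / (1 - ∫ u in (0 : ℝ)..v₁, f u) ≤ f v₂ / (1 - ∫ u in (0 : ℝ)..v₂, f u))
    (x : ℝ → ℝ)
    (hx_mem : ∀ l ∈ Set.Icc (0 : ℝ) 1, x l ∈ Set.Icc (0 : ℝ) 1)
    (hx_cont : ContinuousOn x (Set.Icc 0 1))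
    (hx_convex : ConvexOn ℝ (Set.Icc 0 1) x)
    (hx_max : ∀ l ∈ Set.Icc (0 : ℝ) 1, ∀ y ∈ Set.Icc (0 : ℝ) 1,
      gRev c f y l ≤ gRev c f (x l) l)
    (hx_lt_one : ∀ l ∈ Set.Icc (0 : ℝ) 1, l < 1 → x l < 1) :
    StrictMonoOn x (Set.Icc 0 1) :=
  optimal_signal_ratio_strictMono_general c hc f hf_cont hf_pos hf_int hMHR x hx_mem hx_cont hx_max
    hx_lt_one
end

section
/- Let x : [0,1] → ℝ be twice differentiable and convex (x''(l) ≥ 0) with x(l) > 0 for all l ∈ [0,1] and x(1) = 1, and let k ≥ 1 be an integer. Then on any subinterval of [0,1) on which x(l)^k > l, both of the functions l ↦ (l + 1 − 2·x(l)^k)/(x(l)^k − l) and l ↦ (1 − x(l)^k)/(x(l)^k − l) are nondecreasing in l. -/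
/-!
With `σ = x ^ k`, which is convex on `[0,1]` as a power of a nonnegative convex function, the
chord slope `s(l) = (1 - σ l) / (1 - l)` towards the point `(1, σ 1) = (1, 1)` is nondecreasing.
Since `σ l - l = (1 - l) - (1 - σ l)`, the second fraction equals `s / (1 - s)` with `s < 1`, an
increasing function of `s`, and the first fraction is the second one minus `1`.
-/

open Set

lemma convexOn_of_hasDerivAt2_nonneg {D : Set ℝ} (hD : Convex ℝ D) {f f' f'' : ℝ → ℝ}
    (hf : ∀ t ∈ D, HasDerivAt f (f' t) t) (hf' : ∀ t ∈ D, HasDerivAt f' (f'' t) t)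
    (hf''₀ : ∀ t ∈ D, 0 ≤ f'' t) : ConvexOn ℝ D f :=
  convexOn_of_hasDerivWithinAt2_nonneg hD
    (fun t ht ↦ (hf t ht).continuousAt.continuousWithinAt)
    (fun t ht ↦ (hf t (interior_subset ht)).hasDerivWithinAt)
    (fun t ht ↦ (hf' t (interior_subset ht)).hasDerivWithinAt)
    (fun t ht ↦ hf''₀ t (interior_subset ht))

lemma div_sub_le_div_sub_of_div_le_div {𝕜 : Type*} [Field 𝕜] [LinearOrder 𝕜]
    [IsStrictOrderedRing 𝕜] {a₁ b₁ a₂ b₂ : 𝕜} (hb₁ : 0 < b₁) (hb₂ : 0 < b₂)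
    (h₁ : a₁ < b₁) (h₂ : a₂ < b₂) (h : a₁ / b₁ ≤ a₂ / b₂) :
    a₁ / (b₁ - a₁) ≤ a₂ / (b₂ - a₂) := by
  rw [div_le_div_iff₀ hb₁ hb₂] at h
  rw [div_le_div_iff₀ (sub_pos.2 h₁) (sub_pos.2 h₂)]
  linear_combination h

lemma ConvexOn.one_sub_div_sub_le_of_map_one {f : ℝ → ℝ} (hf : ConvexOn ℝ (Icc 0 1) f)
    (hf₁ : f 1 = 1) {l₁ l₂ : ℝ} (h₀ : 0 ≤ l₁) (h₁₂ : l₁ ≤ l₂) (h₂ : l₂ < 1) (hl₁ : l₁ < f l₁)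
    (hl₂ : l₂ < f l₂) : (1 - f l₁) / (f l₁ - l₁) ≤ (1 - f l₂) / (f l₂ - l₂) := by
  have hslope : (1 - f l₁) / (1 - l₁) ≤ (1 - f l₂) / (1 - l₂) := by
    have := hf.secant_mono (right_mem_Icc.2 zero_le_one) ⟨h₀, by linarith⟩ ⟨h₀.trans h₁₂, h₂.le⟩
      (by linarith) h₂.ne h₁₂
    rwa [hf₁, ← neg_div_neg_eq, neg_sub, neg_sub, ← neg_div_neg_eq (f l₂ - 1), neg_sub,
      neg_sub] at this
  have key := div_sub_le_div_sub_of_div_le_div (by linarith) (by linarith) (by linarith)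
    (by linarith) hslope
  rwa [sub_sub_sub_cancel_left, sub_sub_sub_cancel_left] at key

theorem signal_ratio_fractions_monotone_general (x x' x'' : ℝ → ℝ)
    (hderiv : ∀ l ∈ Set.Icc (0 : ℝ) 1, HasDerivAt x (x' l) l)
    (hderiv' : ∀ l ∈ Set.Icc (0 : ℝ) 1, HasDerivAt x' (x'' l) l)
    (hconvex : ∀ l ∈ Set.Icc (0 : ℝ) 1, 0 ≤ x'' l)
    (hpos : ∀ l ∈ Set.Icc (0 : ℝ) 1, 0 < x l)
    (hone : x 1 = 1)
    (k : ℕ) :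
    ∀ l₁ l₂ : ℝ, 0 ≤ l₁ → l₁ ≤ l₂ → l₂ < 1 →
      (∀ l ∈ Set.Icc l₁ l₂, l < x l ^ k) →
      ((l₁ + 1 - 2 * x l₁ ^ k) / (x l₁ ^ k - l₁)
          ≤ (l₂ + 1 - 2 * x l₂ ^ k) / (x l₂ ^ k - l₂))
      ∧ ((1 - x l₁ ^ k) / (x l₁ ^ k - l₁) ≤ (1 - x l₂ ^ k) / (x l₂ ^ k - l₂)) := by
  intro l₁ l₂ h₀ h₁₂ h₂ hgt
  have hσ : ConvexOn ℝ (Icc 0 1) (x ^ k) :=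
    (convexOn_of_hasDerivAt2_nonneg (convex_Icc 0 1) hderiv hderiv' hconvex).pow
      (fun l hl ↦ (hpos l hl).le) k
  have hl₁ := hgt l₁ ⟨le_rfl, h₁₂⟩
  have hl₂ := hgt l₂ ⟨h₁₂, le_rfl⟩
  have hmono : (1 - x l₁ ^ k) / (x l₁ ^ k - l₁) ≤ (1 - x l₂ ^ k) / (x l₂ ^ k - l₂) :=
    hσ.one_sub_div_sub_le_of_map_one (by simp [hone]) h₀ h₁₂ h₂ hl₁ hl₂
  have hfirst (l : ℝ) (hl : l < x l ^ k) :
      (l + 1 - 2 * x l ^ k) / (x l ^ k - l) = (1 - x l ^ k) / (x l ^ k - l) - 1 := by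
    rw [div_sub_one (sub_pos.2 hl).ne']
    congr 1; ring
  refine ⟨?_, hmono⟩
  rw [hfirst l₁ hl₁, hfirst l₂ hl₂]
  exact sub_le_sub_right hmono 1

/-- Let `x : [0,1] → ℝ` be twice differentiable and convex (`x'' ≥ 0`) with `x > 0` on
`[0,1]` and `x 1 = 1`, and let `k ≥ 1`. On any subinterval of `[0,1)` on which
`x(l)^k > l`, both `l ↦ (l + 1 − 2·x(l)^k)/(x(l)^k − l)` and
`l ↦ (1 − x(l)^k)/(x(l)^k − l)` are nondecreasing in `l`. -/
theorem signal_ratio_fractions_monotone (x x' x'' : ℝ → ℝ)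
    (hderiv : ∀ l ∈ Set.Icc (0 : ℝ) 1, HasDerivAt x (x' l) l)
    (hderiv' : ∀ l ∈ Set.Icc (0 : ℝ) 1, HasDerivAt x' (x'' l) l)
    (hconvex : ∀ l ∈ Set.Icc (0 : ℝ) 1, 0 ≤ x'' l)
    (hpos : ∀ l ∈ Set.Icc (0 : ℝ) 1, 0 < x l)
    (hone : x 1 = 1)
    (k : ℕ) (hk : 1 ≤ k) :
    ∀ l₁ l₂ : ℝ, 0 ≤ l₁ → l₁ ≤ l₂ → l₂ < 1 →
      (∀ l ∈ Set.Icc l₁ l₂, l < x l ^ k) →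
      ((l₁ + 1 - 2 * x l₁ ^ k) / (x l₁ ^ k - l₁)
          ≤ (l₂ + 1 - 2 * x l₂ ^ k) / (x l₂ ^ k - l₂))
      ∧ ((1 - x l₁ ^ k) / (x l₁ ^ k - l₁) ≤ (1 - x l₂ ^ k) / (x l₂ ^ k - l₂)) :=
  signal_ratio_fractions_monotone_general x x' x'' hderiv hderiv' hconvex hpos hone k
end

section
/- Let a, b be real numbers with 0 < a < b < 1. Then the function t ↦ (1 − a^{t+1})/(1 − b^t) is strictly decreasing on (0, ∞): for all 0 < t₁ < t₂, (1 − a^{t₁+1})/(1 − b^{t₁}) > (1 − a^{t₂+1})/(1 − b^{t₂}). -/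
/-!
Since `1 - b ^ t > 0`, the claim is equivalent to
`(1 - a^(t₂+1)) / (1 - a^(t₁+1)) < (1 - b^t₂) / (1 - b^t₁)`. With `r = (t₂+1)/(t₁+1) > 1`,
the left side is `(1 - x^r)/(1 - x)` at `x = a^(t₁+1)`, the slope of the secant of the strictly
convex `y ↦ y^r` between `x` and `1`; it increases with `x`, so replacing `a` by `b` makes it larger.
Finally, `(1 - b·u)/(1 - b·v) < (1 - u)/(1 - v)` for `u = b^t₂ < v = b^t₁` removes the shift by one
in the exponent of `b`.
-/

open Real Set

lemma one_sub_rpow_div_one_sub_lt {r x y : ℝ} (hr : 1 < r) (hx : 0 ≤ x) (hxy : x < y)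
    (hy : y < 1) : (1 - x ^ r) / (1 - x) < (1 - y ^ r) / (1 - y) := by
  simpa using (strictConvexOn_rpow hr).secant_strict_mono_aux3 (mem_Ici.2 hx)
    (mem_Ici.2 zero_le_one) hxy hy

lemma one_sub_rpow_div_one_sub_rpow_lt {a b s s' : ℝ} (ha : 0 ≤ a) (hab : a < b) (hb : b < 1)
    (hs : 0 < s) (hss' : s < s') :
    (1 - a ^ s') / (1 - a ^ s) < (1 - b ^ s') / (1 - b ^ s) := by
  have hpow : ∀ c : ℝ, 0 ≤ c → (c ^ s) ^ (s' / s) = c ^ s' := fun c hc => by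
    rw [← rpow_mul hc, mul_div_cancel₀ _ hs.ne']
  rw [← hpow a ha, ← hpow b (ha.trans hab.le)]
  exact one_sub_rpow_div_one_sub_lt ((one_lt_div hs).2 hss') (rpow_nonneg ha s)
    (rpow_lt_rpow ha hab hs) (rpow_lt_one (ha.trans hab.le) hb hs)

lemma one_sub_mul_div_one_sub_mul_lt {b u v : ℝ} (hb₀ : 0 ≤ b) (hb : b < 1) (huv : u < v)
    (hv : v < 1) : (1 - u * b) / (1 - v * b) < (1 - u) / (1 - v) := by
  have hvb : v * b < 1 := by nlinarith
  rw [div_lt_div_iff₀ (by linarith) (by linarith)]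
  nlinarith

/-- For `0 < a < b < 1`, the function `t ↦ (1 − a^{t+1})/(1 − b^t)` is strictly
decreasing on `(0, ∞)` (real powers). -/
theorem ratio_strict_anti (a b : ℝ) (ha : 0 < a) (hab : a < b) (hb : b < 1) :
    ∀ t₁ t₂ : ℝ, 0 < t₁ → t₁ < t₂ →
      (1 - a ^ (t₂ + 1)) / (1 - b ^ t₂) < (1 - a ^ (t₁ + 1)) / (1 - b ^ t₁) := by
  intro t₁ t₂ ht₁ ht
  have hb₀ : 0 < b := ha.trans hab
  have hshift : (1 - a ^ (t₂ + 1)) / (1 - a ^ (t₁ + 1)) < (1 - b ^ t₂) / (1 - b ^ t₁) := by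
    calc (1 - a ^ (t₂ + 1)) / (1 - a ^ (t₁ + 1))
        < (1 - b ^ (t₂ + 1)) / (1 - b ^ (t₁ + 1)) :=
          one_sub_rpow_div_one_sub_rpow_lt ha.le hab hb (by linarith) (by linarith)
      _ = (1 - b ^ t₂ * b) / (1 - b ^ t₁ * b) := by
          rw [rpow_add_one hb₀.ne', rpow_add_one hb₀.ne']
      _ < (1 - b ^ t₂) / (1 - b ^ t₁) :=
          one_sub_mul_div_one_sub_mul_lt hb₀.le hb (rpow_lt_rpow_of_exponent_gt hb₀ hb ht)
            (rpow_lt_one hb₀.le hb ht₁)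
  have hA₁ : a ^ (t₁ + 1) < 1 := rpow_lt_one ha.le (hab.trans hb) (by linarith)
  have hB₁ : b ^ t₁ < 1 := rpow_lt_one hb₀.le hb ht₁
  have hB₂ : b ^ t₂ < 1 := rpow_lt_one hb₀.le hb (ht₁.trans ht)
  rw [div_lt_div_iff₀ (by linarith) (by linarith)] at hshift ⊢
  linarith
end

section
/- For all real numbers a, k, x with 0 < a < 1, k > 0 and a < x < 1: a^{k+1}·(ln a)·(x^k − 1) − (a^{k+1} − 1)·x^k·(ln x) < 0. -/
/-!
With `A = a^(k+1)` and `X = x^k` we have `A < X < 1`, and the claim follows from the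
monotonicity of `t ↦ t ln t / (t - 1)` on `(0, 1)`, in the cleared-denominator form
`X (1 - A) ln X < A (1 - X) ln A`, together with `k < k + 1`.
-/

open Real

lemma mul_one_sub_mul_log_lt {A X : ℝ} (hA : 0 < A) (hAX : A < X) (hX : X < 1) :
    X * (1 - A) * log X < A * (1 - X) * log A := by
  have hX0 : 0 < X := hA.trans hAX
  have hratio : A * (log X - log A) < X - A := by
    have h := log_lt_sub_one_of_pos (div_pos hX0 hA) (ne_of_gt ((one_lt_div hA).2 hAX))
    rw [log_div hX0.ne' hA.ne'] at h
    calc A * (log X - log A) < A * (X / A - 1) := mul_lt_mul_of_pos_left h hA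
      _ = X - A := by field_simp
  have hlogX : log X ≤ X - 1 := log_le_sub_one_of_pos hX0
  nlinarith [mul_lt_mul_of_pos_left hratio (sub_pos.2 hX),
    mul_le_mul_of_nonneg_left hlogX (sub_pos.2 hAX).le]

theorem claim_two_inequality_general (a k x : ℝ) (ha0 : 0 < a) (hk : 0 < k)
    (hax : a < x) (hx1 : x < 1) :
    a ^ (k + 1) * Real.log a * (x ^ k - 1) - (a ^ (k + 1) - 1) * x ^ k * Real.log x < 0 := by
  have hx0 : 0 < x := ha0.trans hax
  have ha1 : a < 1 := hax.trans hx1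
  have hAX : a ^ (k + 1) < x ^ k :=
    calc a ^ (k + 1) < x ^ (k + 1) := rpow_lt_rpow ha0.le hax (by linarith)
      _ ≤ x ^ k := rpow_le_rpow_of_exponent_ge hx0 hx1.le (by linarith)
  have key := mul_one_sub_mul_log_lt (rpow_pos_of_pos ha0 _) hAX (rpow_lt_one hx0.le hx1 hk)
  rw [log_rpow ha0, log_rpow hx0] at key
  have hneg : a ^ (k + 1) * (1 - x ^ k) * log a < 0 :=
    mul_neg_of_pos_of_neg
      (mul_pos (rpow_pos_of_pos ha0 _) (sub_pos.2 (rpow_lt_one hx0.le hx1 hk))) (log_neg ha0 ha1)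
  nlinarith

/-- For `0 < a < 1`, `k > 0` and `a < x < 1` (real powers):
`a^{k+1}·ln(a)·(x^k − 1) − (a^{k+1} − 1)·x^k·ln(x) < 0`. -/
theorem claim_two_inequality (a k x : ℝ) (ha0 : 0 < a) (ha1 : a < 1) (hk : 0 < k)
    (hax : a < x) (hx1 : x < 1) :
    a ^ (k + 1) * Real.log a * (x ^ k - 1) - (a ^ (k + 1) - 1) * x ^ k * Real.log x < 0 :=
  claim_two_inequality_general a k x ha0 hk hax hx1
end

section
/- Let l ∈ (0,1) be a real number satisfying ((3+l)/4)^5 = l, and set σᵢ = ((3+l)/4)^{4−i} for i = 0, 1, 2, 3. Define A = (l + 1 − 2σ₀)/(σ₀ − l) and qᵢ = (1 − σᵢ)/(σᵢ − l) for i = 1, 2, 3, and S = 1 + A·(1 + q₁ + q₁·q₂ + q₁·q₂·q₃). Then S ≥ 25; in particular 1/S ≤ 0.04. -/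
/-! Write `r = (3 + l) / 4`, so that `l = r ^ 5 = 4 * r - 3`. Then `σᵢ = r ^ (4 - i)` and the
ratios `qᵢ` telescope, `q₁ q₂ = 1 / r ^ 5 = 1 / l`, while the linear relation gives `q₃ = 1 / 3`,
`q₂ = (1 + r) / (3 - r)` and `A = 3 / l - 1`. Hence `S` is an explicit function of `r` and `l`,
decreasing in both, and it suffices to locate the root: dividing `r ^ 5 - 4 r + 3` by `r - 1` gives
`r ^ 4 + r ^ 3 + r ^ 2 + r = 3`, so `r < 0.8883` and `l < 0.5532`. -/

theorem one_sub_pow_div_mul_one_sub_pow_div {K : Type*} [Field K] {r : K} (hr : r ≠ 0) {k m : ℕ}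
    (hk : r ^ k ≠ 1) (hm : r ^ m ≠ 1) :
    (1 - r ^ k) / (r ^ k - r ^ (k + m)) * ((1 - r ^ m) / (r ^ m - r ^ (k + m))) =
      1 / r ^ (k + m) := by
  have hk' : 1 - r ^ k ≠ 0 := sub_ne_zero.mpr hk.symm
  have hm' : 1 - r ^ m ≠ 0 := sub_ne_zero.mpr hm.symm
  rw [show r ^ k - r ^ (k + m) = r ^ k * (1 - r ^ m) by ring,
    show r ^ m - r ^ (k + m) = r ^ m * (1 - r ^ k) by ring, pow_add]
  field_simp

namespace LinearSignalRatio

/-- The paper's `qᵢ` for `σᵢ = r ^ k` and `l = r ^ 5`. -/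
noncomputable def q (r : ℝ) (k : ℕ) : ℝ := (1 - r ^ k) / (r ^ k - r ^ 5)

/-- The paper's `A` for `σ₀ = r ^ 4` and `l = r ^ 5`. -/
noncomputable def A (r : ℝ) : ℝ := (r ^ 5 + 1 - 2 * r ^ 4) / (r ^ 4 - r ^ 5)

variable {r : ℝ}

theorem q_three_mul_q_two (hr0 : 0 < r) (hr1 : r < 1) : q r 3 * q r 2 = 1 / r ^ 5 :=
  one_sub_pow_div_mul_one_sub_pow_div (k := 3) (m := 2) hr0.ne'
    (pow_lt_one₀ hr0.le hr1 (by norm_num)).ne (pow_lt_one₀ hr0.le hr1 (by norm_num)).ne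

theorem quartic_eq (hfix : r ^ 5 = 4 * r - 3) (hr1 : r < 1) :
    r ^ 4 + r ^ 3 + r ^ 2 + r = 3 := by
  have h : (r - 1) * (r ^ 4 + r ^ 3 + r ^ 2 + r - 3) = 0 := by linear_combination hfix
  rcases mul_eq_zero.mp h with h | h <;> linarith

theorem lt_of_fixpoint (hfix : r ^ 5 = 4 * r - 3) (hr1 : r < 1) : r < 0.8883 := by
  by_contra! h
  have : (0.8883 : ℝ) ^ 4 + 0.8883 ^ 3 + 0.8883 ^ 2 + 0.8883 ≤ r ^ 4 + r ^ 3 + r ^ 2 + r := by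
    gcongr
  rw [quartic_eq hfix hr1] at this
  norm_num at this

theorem q_one_eq (hfix : r ^ 5 = 4 * r - 3) (hr1 : r < 1) : q r 1 = 1 / 3 := by
  rw [q, div_eq_div_iff (by linarith) (by norm_num)]
  linear_combination hfix

theorem q_two_eq (hfix : r ^ 5 = 4 * r - 3) (hr1 : r < 1) : q r 2 = (1 + r) / (3 - r) := by
  rw [q, div_eq_div_iff (by nlinarith) (by linarith)]
  linear_combination (1 + r) * hfix

theorem q_three_eq (hfix : r ^ 5 = 4 * r - 3) (hr0 : 0 < r) (hr1 : r < 1) :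
    q r 3 = (3 - r) / ((1 + r) * r ^ 5) := by
  have h := q_three_mul_q_two hr0 hr1
  rw [q_two_eq hfix hr1] at h
  rw [eq_div_of_mul_eq (div_ne_zero (by linarith) (by linarith)) h]
  field_simp

theorem A_eq (hfix : r ^ 5 = 4 * r - 3) (hr0 : 0 < r) (hr1 : r < 1) : A r = 3 / r ^ 5 - 1 := by
  have : r ^ 4 - r ^ 5 ≠ 0 := by
    rw [show r ^ 4 - r ^ 5 = r ^ 4 * (1 - r) by ring]
    exact mul_ne_zero (by positivity) (by linarith)
  rw [A, div_eq_iff this]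
  field_simp
  linear_combination -hfix

theorem twenty_five_le (l : ℝ) (hl0 : 0 < l) (hl : l ≤ 0.5532) (hr0 : 0 ≤ r)
    (hr : r ≤ 0.8883) :
    25 ≤ 1 + (3 / l - 1) * (1 + (3 - r) / ((1 + r) * l) + 4 / (3 * l)) :=
  calc (25 : ℝ) ≤ 1 + (3 / 0.5532 - 1) *
        (1 + (3 - 0.8883) / ((1 + 0.8883) * 0.5532) + 4 / (3 * 0.5532)) := by norm_num
    _ ≤ _ := by
      have : 1 ≤ 3 / l := by rw [le_div_iff₀ hl0]; linarith
      gcongr; linarith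

end LinearSignalRatio

open LinearSignalRatio in
/-- For the uniform-distribution optimal signal ratio `(3+l)/4` with fixed point
`((3+l)/4)^5 = l`, the quantity `S = S(4,l)` built from the candidate signals
`σᵢ = ((3+l)/4)^{4−i}` satisfies `S ≥ 25`, hence `1/S ≤ 0.04`. -/
theorem uniform_worst_case_mass_bound (l : ℝ) (hl0 : 0 < l) (hl1 : l < 1)
    (hfix : ((3 + l) / 4) ^ 5 = l)
    (σ₀ σ₁ σ₂ σ₃ A q₁ q₂ q₃ S : ℝ)
    (hσ₀ : σ₀ = ((3 + l) / 4) ^ 4) (hσ₁ : σ₁ = ((3 + l) / 4) ^ 3)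
    (hσ₂ : σ₂ = ((3 + l) / 4) ^ 2) (hσ₃ : σ₃ = ((3 + l) / 4) ^ 1)
    (hA : A = (l + 1 - 2 * σ₀) / (σ₀ - l))
    (hq₁ : q₁ = (1 - σ₁) / (σ₁ - l)) (hq₂ : q₂ = (1 - σ₂) / (σ₂ - l))
    (hq₃ : q₃ = (1 - σ₃) / (σ₃ - l))
    (hS : S = 1 + A * (1 + q₁ + q₁ * q₂ + q₁ * q₂ * q₃)) :
    25 ≤ S ∧ 1 / S ≤ 0.04 := by
  obtain ⟨r, rfl⟩ : ∃ r, l = 4 * r - 3 := ⟨(3 + l) / 4, by ring⟩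
  rw [show (3 + (4 * r - 3)) / 4 = r by ring] at hfix hσ₀ hσ₁ hσ₂ hσ₃
  subst hσ₀ hσ₁ hσ₂ hσ₃
  have hr0 : 0 < r := by linarith
  have hr1 : r < 1 := by linarith
  rw [← hfix] at hA hq₁ hq₂ hq₃ hl0
  have hr : r < 0.8883 := lt_of_fixpoint hfix hr1
  change A = LinearSignalRatio.A r at hA
  change q₁ = q r 3 at hq₁
  change q₂ = q r 2 at hq₂
  change q₃ = q r 1 at hq₃
  subst hA hq₁ hq₂ hq₃
  have h25 : 25 ≤ S := by
    rw [hS, q_three_mul_q_two hr0 hr1, q_three_eq hfix hr0 hr1, q_one_eq hfix hr1,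
      A_eq hfix hr0 hr1]
    calc (25 : ℝ) ≤ _ := twenty_five_le (r ^ 5) hl0 (by linarith) hr0.le hr.le
      _ = _ := by ring
  exact ⟨h25, by linarith [one_div_le_one_div_of_le (by norm_num) h25]⟩
end
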